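/- arXiv:2401.17708 — 2 statements merged into one kernel-verified Lean document; each statement's English description precedes it below -/
import Mathlib

section
/- Consider the compartmental NFDE (d/dt) Dz_t = F(t, z_t) under (C1), (C3), (C4) and let z: (−∞,T) → ℝ^m be a solution (continuous, with t ↦ Dz_t differentiable on [0,T) and derivative F(t,z_t)), with z bounded on bounded intervals. Then the total mass satisfies, for all t ∈ [0,T): M(t, z_t) = M(0, z_0) + Σ_{i=1}^m ∫_0^t [Ĩ_i(s) − g̃_{0i}(s, z_i(s))] ds; in particular (d/dt) M(t, z_t) = Σ_{i=1}^m [Ĩ_i(t) − g̃_{0i}(t, z_i(t))]. -/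
open MeasureTheory Filter Set

/-- `x` is bounded and uniformly continuous on `(-∞,0]` (membership in `BU`,
where only the restriction of `x` to `(-∞,0]` is relevant). -/
def IsBU (m : ℕ) (x : ℝ → Fin m → ℝ) : Prop :=
  (∃ C : ℝ, ∀ s : ℝ, s ≤ 0 → ‖x s‖ ≤ C) ∧
  ∀ ε > (0:ℝ), ∃ δ > (0:ℝ), ∀ s : ℝ, s ≤ 0 → ∀ s' : ℝ, s' ≤ 0 →
    |s - s'| < δ → ‖x s - x s'‖ < ε

/-- the supremum norm `‖x‖_∞ = sup_{s ≤ 0} ‖x(s)‖`. -/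
noncomputable def supNorm (m : ℕ) (x : ℝ → Fin m → ℝ) : ℝ :=
  ⨆ s : Set.Iic (0:ℝ), ‖x (s : ℝ)‖

/-- time shift: `shift m x t = x_t`, where `x_t(s) = x(t+s)`. -/
def shift (m : ℕ) (x : ℝ → Fin m → ℝ) (t : ℝ) : ℝ → Fin m → ℝ :=
  fun s => x (t + s)

/-- The operator `Dx = x(0) - ∫_{-∞}^0 [dν(s)] x(s)`, where the matrix of real
(signed) Borel measures `ν` is given through a positive part `νp` and a
negative part `νn` (Jordan decomposition), i.e. `ν i j = νp i j - νn i j`. -/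
noncomputable def Dop (m : ℕ) (νp νn : Fin m → Fin m → Measure ℝ)
    (x : ℝ → Fin m → ℝ) : Fin m → ℝ :=
  fun i => x 0 i - ∑ j : Fin m,
    ((∫ s in Set.Iic (0:ℝ), x s j ∂(νp i j)) - ∫ s in Set.Iic (0:ℝ), x s j ∂(νn i j))

/-- the measures `ν_ij` have finite total variation and `|ν_ij|({0}) = 0`. -/
def NuCond (m : ℕ) (νp νn : Fin m → Fin m → Measure ℝ) : Prop :=
  (∀ i j, νp i j Set.univ ≠ ⊤) ∧ (∀ i j, νn i j Set.univ ≠ ⊤) ∧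
  (∀ i j, νp i j {0} = 0) ∧ (∀ i j, νn i j {0} = 0)

/-- `D` is stable: there is a continuous `c : [0,∞) → [0,∞)` with `c(t) → 0`
as `t → ∞` such that every continuous `x : ℝ → ℝ^m` with `x_0 ∈ BU` and
`D x_t = 0` for all `t ≥ 0` satisfies `‖x(t)‖ ≤ c(t) ‖x_0‖_∞` for all `t ≥ 0`. -/
def IsStableOp (m : ℕ) (D : (ℝ → Fin m → ℝ) → Fin m → ℝ) : Prop :=
  ∃ c : ℝ → ℝ, ContinuousOn c (Set.Ici 0) ∧ (∀ t : ℝ, 0 ≤ t → 0 ≤ c t) ∧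
    Filter.Tendsto c Filter.atTop (nhds 0) ∧
    ∀ x : ℝ → Fin m → ℝ, Continuous x → IsBU m x →
      (∀ t : ℝ, 0 ≤ t → D (shift m x t) = 0) →
      ∀ t : ℝ, 0 ≤ t → ‖x t‖ ≤ c t * supNorm m x

/-- the convolution operator `D̂`, `(D̂x)(s) = D x_s`. -/
noncomputable def Dhat (m : ℕ) (νp νn : Fin m → Fin m → Measure ℝ)
    (x : ℝ → Fin m → ℝ) : ℝ → Fin m → ℝ :=
  fun s => Dop m νp νn (shift m x s)

/-- the seminorm `‖x‖_n = sup_{s ∈ [-n,0]} ‖x(s)‖`. -/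
noncomputable def normOn (m : ℕ) (n : ℕ) (x : ℝ → Fin m → ℝ) : ℝ :=
  ⨆ s : Set.Icc (-(n:ℝ)) 0, ‖x (s : ℝ)‖

/-- the compact-open metric
`d(x,y) = ∑_{n ≥ 1} 2⁻ⁿ ‖x-y‖_n / (1 + ‖x-y‖_n)`. -/
noncomputable def coDist (m : ℕ) (x y : ℝ → Fin m → ℝ) : ℝ :=
  ∑' n : ℕ, (1/2 : ℝ)^(n+1) *
    (normOn m (n+1) (fun s => x s - y s)) / (1 + normOn m (n+1) (fun s => x s - y s))

/-- `sup_{0 ≤ u ≤ t} ‖h(u)‖`. -/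
noncomputable def supOn (m : ℕ) (h : ℝ → Fin m → ℝ) (t : ℝ) : ℝ :=
  ⨆ u : Set.Icc (0:ℝ) t, ‖h (u : ℝ)‖

/-- the order `x ≤_D y`, i.e. `D x_s ≤ D y_s` (componentwise) for all `s ≤ 0`. -/
def leD (m : ℕ) (νp νn : Fin m → Fin m → Measure ℝ) (x y : ℝ → Fin m → ℝ) : Prop :=
  ∀ s : ℝ, s ≤ 0 → ∀ i, Dhat m νp νn x s i ≤ Dhat m νp νn y s i

/-! ### Compartmental systems

Indices: compartments are `j : Fin m`; in the first index of the transport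
functions `g`, `0 : Fin (m+1)` denotes the environment `C_0` and `j.succ`
denotes the compartment `C_j`.  `g i j t v` is the transport function `g̃_ij(t,v)`
and `It i t` is the inflow `Ĩ_i(t) = g̃_{i0}(t)`. -/

/-- The right-hand side of the compartmental system:
`F_i(t,x) = -g̃_{0i}(t,x_i(0)) - ∑_j g̃_{ji}(t,x_i(0))
  + ∑_j ∫_{-∞}^0 g̃_{ij}(t+s, x_j(s)) dμ_ij(s) + Ĩ_i(t)`. -/
noncomputable def Fcomp (m : ℕ) (μ : Fin m → Fin m → Measure ℝ)
    (g : Fin (m+1) → Fin m → ℝ → ℝ → ℝ) (It : Fin m → ℝ → ℝ)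
    (t : ℝ) (x : ℝ → Fin m → ℝ) : Fin m → ℝ :=
  fun i => - g 0 i t (x 0 i) - (∑ j : Fin m, g j.succ i t (x 0 i))
    + (∑ j : Fin m, ∫ s in Set.Iic (0:ℝ), g i.succ j (t + s) (x s j) ∂(μ i j))
    + It i t

/-- The total mass
`M(t,x) = ∑_i D_i x + ∑_i ∑_j ∫_{-∞}^0 (∫_s^0 g̃_{ji}(t+τ, x_i(τ)) dτ) dμ_ji(s)`. -/
noncomputable def Mass (m : ℕ) (μ ν : Fin m → Fin m → Measure ℝ)
    (g : Fin (m+1) → Fin m → ℝ → ℝ → ℝ) (t : ℝ) (x : ℝ → Fin m → ℝ) : ℝ :=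
  (∑ i : Fin m, Dop m ν (fun _ _ => 0) x i) +
    ∑ i : Fin m, ∑ j : Fin m,
      ∫ s in Set.Iic (0:ℝ), (∫ τ in s..(0:ℝ), g j.succ i (t + τ) (x τ i)) ∂(μ j i)

/-- (C1): the transport functions are `C¹`-admissible: `C¹` in the second
variable; `g̃` and `∂g̃/∂v` uniformly continuous and bounded on `ℝ × {v₀}` for
all `v₀`; all components monotone in the second variable; `g̃_ij(t,0) = 0`;
and the inflows `Ĩ_i ≥ 0` are bounded and uniformly continuous. -/
def C1cond (m : ℕ) (g : Fin (m+1) → Fin m → ℝ → ℝ → ℝ) (It : Fin m → ℝ → ℝ) : Prop :=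
  (∀ i j t, ContDiff ℝ 1 (fun v => g i j t v)) ∧
  (∀ i j (v : ℝ), ∃ C : ℝ, ∀ t : ℝ, |g i j t v| ≤ C) ∧
  (∀ i j (v : ℝ), ∀ ε > (0:ℝ), ∃ δ > (0:ℝ), ∀ t t' : ℝ, |t - t'| < δ →
    |g i j t v - g i j t' v| < ε) ∧
  (∀ i j (v : ℝ), ∃ C : ℝ, ∀ t : ℝ, |deriv (g i j t) v| ≤ C) ∧
  (∀ i j (v : ℝ), ∀ ε > (0:ℝ), ∃ δ > (0:ℝ), ∀ t t' : ℝ, |t - t'| < δ →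
    |deriv (g i j t) v - deriv (g i j t') v| < ε) ∧
  (∀ i j t, Monotone (g i j t)) ∧
  (∀ i j t, g i j t 0 = 0) ∧
  (∀ i (t : ℝ), 0 ≤ It i t) ∧
  (∀ i, ∃ C : ℝ, ∀ t : ℝ, |It i t| ≤ C) ∧
  (∀ i, ∀ ε > (0:ℝ), ∃ δ > (0:ℝ), ∀ t t' : ℝ, |t - t'| < δ → |It i t - It i t'| < ε)

/-- (C3): the `μ_ij` are positive Borel measures on `(-∞,0]` with
`μ_ij((-∞,0]) = 1` and `∫_{-∞}^0 |s| dμ_ij(s) < ∞`. -/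
def C3cond (m : ℕ) (μ : Fin m → Fin m → Measure ℝ) : Prop :=
  (∀ i j, μ i j (Set.Iic 0) = 1) ∧ (∀ i j, μ i j (Set.Ioi 0) = 0) ∧
  (∀ i j, MeasureTheory.IntegrableOn (fun s : ℝ => |s|) (Set.Iic 0) (μ i j))

/-- (C4): the `ν_ij` are positive Borel measures on `(-∞,0]` with finite total
variation, `ν_ij({0}) = 0` and `∑_j ν_ij((-∞,0]) < 1` for each `i` (so that
the associated `D`-operator is stable). -/
def C4cond (m : ℕ) (ν : Fin m → Fin m → Measure ℝ) : Prop :=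
  (∀ i j, ν i j Set.univ ≠ ⊤) ∧ (∀ i j, ν i j (Set.Ioi 0) = 0) ∧
  (∀ i j, ν i j {0} = 0) ∧ (∀ i, ∑ j : Fin m, (ν i j (Set.Iic 0)).toReal < 1)

/-- `cc i j = c_ij = inf_{(t,v)} ∂g̃_ij/∂v(t,v)` and
`dd i j = d_ij = sup_{(t,v)} ∂g̃_ij/∂v(t,v)`. -/
def CDcond (m : ℕ) (g : Fin (m+1) → Fin m → ℝ → ℝ → ℝ)
    (cc dd : Fin (m+1) → Fin m → ℝ) : Prop :=
  (∀ i j, IsGLB {y : ℝ | ∃ t v : ℝ, y = deriv (g i j t) v} (cc i j)) ∧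
  (∀ i j, IsLUB {y : ℝ | ∃ t v : ℝ, y = deriv (g i j t) v} (dd i j))

/-- (C5): the measures `dη_ij = c_ij dμ_ij - (∑_{k=0}^m d_ki) dν_ij` are
positive. -/
def C5cond (m : ℕ) (μ ν : Fin m → Fin m → Measure ℝ)
    (cc dd : Fin (m+1) → Fin m → ℝ) : Prop :=
  ∀ (i j : Fin m) (A : Set ℝ), MeasurableSet A →
    (∑ k : Fin (m+1), dd k i) * (ν i j A).toReal ≤ cc i.succ j * (μ i j A).toReal

/-- `zz` is a solution of the compartmental system `(d/dt) D z_t = F(t, z_t)`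
on `(-∞,T)`, with `z_0 ∈ BU`. -/
def IsSolOn (m : ℕ) (μ ν : Fin m → Fin m → Measure ℝ)
    (g : Fin (m+1) → Fin m → ℝ → ℝ → ℝ) (It : Fin m → ℝ → ℝ)
    (T : ℝ) (zz : ℝ → Fin m → ℝ) : Prop :=
  IsBU m zz ∧ ContinuousOn zz (Set.Iio T) ∧
  ∀ t ∈ Set.Ico (0:ℝ) T,
    HasDerivWithinAt (fun τ => Dop m ν (fun _ _ => 0) (shift m zz τ))
      (Fcomp m μ g It t (shift m zz t)) (Set.Ico 0 T) t


/-- A function separately continuous in the second variable, uniformly continuous in the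
first variable for fixed second, and monotone in the second variable is jointly continuous. -/
lemma joint_cont_of_mono {G : ℝ → ℝ → ℝ}
    (hcv : ∀ t, Continuous (G t))
    (hut : ∀ v : ℝ, ∀ ε > (0:ℝ), ∃ δ > (0:ℝ), ∀ t t' : ℝ, |t - t'| < δ →
      |G t v - G t' v| < ε)
    (hmono : ∀ t, Monotone (G t)) :
    Continuous fun p : ℝ × ℝ => G p.1 p.2 := by
  rw [Metric.continuous_iff]
  rintro ⟨t₀, v₀⟩ ε hε
  obtain ⟨δ₁, hδ₁, h1⟩ := Metric.continuousAt_iff.1 (hcv t₀).continuousAt (ε/4) (by linarith)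
  obtain ⟨δ₂, hδ₂, h2⟩ := hut (v₀ + δ₁/2) (ε/4) (by linarith)
  obtain ⟨δ₃, hδ₃, h3⟩ := hut (v₀ - δ₁/2) (ε/4) (by linarith)
  refine ⟨min (δ₁/2) (min δ₂ δ₃), by positivity, ?_⟩
  rintro ⟨t, v⟩ hd
  rw [Prod.dist_eq, max_lt_iff] at hd
  obtain ⟨hdt, hdv⟩ := hd
  rw [Real.dist_eq] at hdt hdv
  have hdt2 : |t - t₀| < δ₂ := lt_of_lt_of_le hdt (le_trans (min_le_right _ _) (min_le_left _ _))
  have hdt3 : |t - t₀| < δ₃ := lt_of_lt_of_le hdt (le_trans (min_le_right _ _) (min_le_right _ _))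
  have hdv1 : |v - v₀| < δ₁/2 := lt_of_lt_of_le hdv (min_le_left _ _)
  have e1 : |G t₀ (v₀ + δ₁/2) - G t₀ v₀| < ε/4 := by
    have h := h1 (x := v₀ + δ₁/2) (by
      rw [Real.dist_eq, add_sub_cancel_left, abs_of_pos (by linarith)]; linarith)
    rwa [Real.dist_eq] at h
  have e2 : |G t₀ (v₀ - δ₁/2) - G t₀ v₀| < ε/4 := by
    have h := h1 (x := v₀ - δ₁/2) (by
      rw [Real.dist_eq]
      have hv : v₀ - δ₁/2 - v₀ = -(δ₁/2) := by ring
      rw [hv, abs_neg, abs_of_pos (by linarith)]; linarith)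
    rwa [Real.dist_eq] at h
  have u1 := h2 t t₀ hdt2
  have u2 := h3 t t₀ hdt3
  have m1 : G t v ≤ G t (v₀ + δ₁/2) := (hmono t) (by cases abs_lt.1 hdv1 with | intro a b => linarith)
  have m2 : G t (v₀ - δ₁/2) ≤ G t v := (hmono t) (by cases abs_lt.1 hdv1 with | intro a b => linarith)
  rw [Real.dist_eq, abs_sub_lt_iff]
  cases abs_lt.1 e1 with | intro a1 b1 =>
  cases abs_lt.1 e2 with | intro a2 b2 =>
  cases abs_lt.1 u1 with | intro a3 b3 =>
  cases abs_lt.1 u2 with | intro a4 b4 =>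
  constructor <;> linarith

/-- bound on a compact `v`-window uniform in `t`, for monotone functions. -/
lemma bound_of_mono {G : ℝ → ℝ → ℝ}
    (hbd : ∀ v : ℝ, ∃ C : ℝ, ∀ t : ℝ, |G t v| ≤ C)
    (hmono : ∀ t, Monotone (G t)) (R : ℝ) :
    ∃ C : ℝ, 0 ≤ C ∧ ∀ t v : ℝ, |v| ≤ R → |G t v| ≤ C := by
  obtain ⟨C₁, hC₁⟩ := hbd R
  obtain ⟨C₂, hC₂⟩ := hbd (-R)
  refine ⟨max C₁ C₂ ⊔ 0, le_max_right _ _, fun t v hv => ?_⟩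
  rw [abs_le]
  obtain ⟨hv1, hv2⟩ := abs_le.1 hv
  constructor
  · have hm := (hmono t) hv1
    have h2 := neg_le_of_abs_le (hC₂ t)
    have h3 : C₂ ≤ max C₁ C₂ ⊔ 0 := le_trans (le_max_right _ _) (le_max_left _ _)
    linarith
  · calc G t v ≤ G t R := (hmono t) hv2
    _ ≤ C₁ := le_of_abs_le (hC₁ t)
    _ ≤ _ := le_trans (le_max_left _ _) (le_max_left _ _)


lemma intAux {h : ℝ → ℝ} {T t' C : ℝ} (μ : Measure ℝ) (hμ1 : μ (Iic 0) = 1)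
    (hT : ContinuousOn h (Iio T)) (ht'T : t' < T) (hCb : ∀ u, u ≤ t' → |h u| ≤ C)
    {u : ℝ} (hu : u ≤ t') : IntegrableOn (fun s => h (u + s)) (Iic 0) μ := by
  haveI : IsFiniteMeasure (μ.restrict (Iic 0)) :=
    ⟨by rw [Measure.restrict_apply_univ, hμ1]; exact ENNReal.one_lt_top⟩
  apply Integrable.mono' (integrable_const C)
  · refine (hT.comp (continuous_const.add continuous_id).continuousOn
      fun s hs => ?_).aestronglyMeasurable measurableSet_Iic
    have hs0 : s ≤ 0 := mem_Iic.1 hs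
    have : u + s ≤ t' := by linarith
    exact mem_Iio.2 (lt_of_le_of_lt this ht'T)
  · rw [ae_restrict_iff' measurableSet_Iic]
    filter_upwards with s hs
    rw [Real.norm_eq_abs]
    have hs0 : s ≤ 0 := mem_Iic.1 hs
    exact hCb _ (by linarith)

lemma contAux {h : ℝ → ℝ} {T t' C : ℝ} (μ : Measure ℝ) (hμ1 : μ (Iic 0) = 1)
    (hT : ContinuousOn h (Iio T)) (ht'T : t' < T) (hCb : ∀ u, u ≤ t' → |h u| ≤ C)
    {u₀ : ℝ} (hu₀ : u₀ < t') :
    ContinuousAt (fun u => ∫ s in Iic 0, h (u + s) ∂μ) u₀ := by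
  haveI : IsFiniteMeasure (μ.restrict (Iic 0)) :=
    ⟨by rw [Measure.restrict_apply_univ, hμ1]; exact ENNReal.one_lt_top⟩
  apply continuousAt_of_dominated (bound := fun _ => C) _ _ (integrable_const C)
  · rw [ae_restrict_iff' measurableSet_Iic]
    filter_upwards with s hs
    have hs0 : s ≤ 0 := mem_Iic.1 hs
    have hlt : u₀ + s < T := by linarith
    have hcomp : ContinuousAt (h ∘ fun x : ℝ => x + s) u₀ :=
      ContinuousAt.comp (hT.continuousAt (Iio_mem_nhds hlt))
        ((continuous_id.add continuous_const).continuousAt)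
    exact hcomp
  · filter_upwards [Iio_mem_nhds (hu₀.trans ht'T)] with x hx
    refine (hT.comp (continuous_const.add continuous_id).continuousOn
      fun s hs => ?_).aestronglyMeasurable measurableSet_Iic
    have hs0 : s ≤ 0 := mem_Iic.1 hs
    have hxT : x < T := mem_Iio.1 hx
    simp only [mem_Iio, id_eq]
    show x + s < T
    linarith
  · filter_upwards [Iio_mem_nhds hu₀] with x hx
    rw [ae_restrict_iff' measurableSet_Iic]
    filter_upwards with s hs
    rw [Real.norm_eq_abs]
    have hs0 : s ≤ 0 := mem_Iic.1 hs
    have hxt : x < t' := mem_Iio.1 hx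
    exact hCb _ (by linarith)


lemma massAux {h : ℝ → ℝ} {T t t' C : ℝ} (μ : Measure ℝ)
    (hμ1 : μ (Iic 0) = 1) (hμ2 : μ (Ioi 0) = 0)
    (hμ3 : MeasureTheory.IntegrableOn (fun s : ℝ => |s|) (Iic 0) μ)
    (hT : ContinuousOn h (Iio T)) (ht0 : 0 ≤ t) (htt' : t < t') (ht'T : t' < T)
    (hC : 0 ≤ C) (hCb : ∀ u, u ≤ t' → |h u| ≤ C) :
    (∫ s in Iic 0, (∫ u in (t+s)..t, h u) ∂μ) - (∫ s in Iic 0, (∫ u in s..(0:ℝ), h u) ∂μ)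
      = ∫ u in (0:ℝ)..t, (h u - ∫ s in Iic 0, h (u+s) ∂μ) := by
  haveI : IsFiniteMeasure μ := by
    constructor
    rw [← Iic_union_Ioi (a := (0:ℝ))]
    exact lt_of_le_of_lt (measure_union_le _ _)
      (by rw [hμ1, hμ2]; simp)
  haveI : IsFiniteMeasure (μ.restrict (Iic 0)) :=
    ⟨by rw [Measure.restrict_apply_univ, hμ1]; exact ENNReal.one_lt_top⟩
  have htT : t < T := htt'.trans ht'T
  have hT0 : (0:ℝ) < T := lt_of_le_of_lt ht0 htT
  -- interval integrability of h on subintervals of (-∞, T)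
  have hInt : ∀ x y : ℝ, x < T → y < T → IntervalIntegrable h volume x y := by
    intro x y hx hy
    exact ((hT.mono fun z hz => lt_of_le_of_lt hz.2 (max_lt hx hy)).intervalIntegrable)
  -- pointwise split
  have split : ∀ s : ℝ, s ≤ 0 →
      (∫ u in (t+s)..t, h u) - (∫ u in s..(0:ℝ), h u)
        = ∫ u in (0:ℝ)..t, (h u - h (u+s)) := by
    intro s hs
    have hts : t + s < T := by linarith
    have hsT : s < T := by linarith
    have h1 : (∫ u in (0:ℝ)..t, h (u+s)) = ∫ u in s..(t+s), h u := by
      have := intervalIntegral.integral_comp_add_right (a := (0:ℝ)) (b := t) h s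
      simpa [zero_add, add_comm] using this
    have intA := intervalIntegral.integral_add_adjacent_intervals
      (hInt (t+s) 0 hts hT0) (hInt 0 t hT0 htT)
    have intB := intervalIntegral.integral_add_adjacent_intervals
      (hInt s (t+s) hsT hts) (hInt (t+s) 0 hts hT0)
    have h2 : (∫ u in (0:ℝ)..t, (h u - h (u+s)))
        = (∫ u in (0:ℝ)..t, h u) - ∫ u in (0:ℝ)..t, h (u+s) := by
      apply intervalIntegral.integral_sub (hInt 0 t hT0 htT)
      have := (hInt s (t+s) hsT hts).comp_add_right s
      simpa using this
    rw [h2, h1]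
    linarith
  -- integrability in s of the partial mass, for r ∈ {0, t}
  have hmeas : ∀ r : ℝ, 0 ≤ r → r ≤ t →
      IntegrableOn (fun s => ∫ u in (r+s)..r, h u) (Iic 0) μ := by
    intro r hr0 hrt
    have hrT : r < T := lt_of_le_of_lt hrt htT
    apply Integrable.mono' (hμ3.const_mul C)
    · -- a.e. strong measurability via continuity
      have hcont : ContinuousOn (fun s => (∫ u in (0:ℝ)..r, h u) - ∫ u in (0:ℝ)..(r+s), h u)
          (Iic 0) := by
        apply continuousOn_const.sub
        intro s hs
        have hs0 : s ≤ 0 := mem_Iic.1 hs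
        have hrs : r + s < T := by linarith
        have hP : ContinuousAt (fun y => ∫ u in (0:ℝ)..y, h u) (r+s) :=
          (intervalIntegral.integral_hasDerivAt_right (hInt 0 (r+s) hT0 hrs)
            (hT.stronglyMeasurableAtFilter isOpen_Iio (r+s) hrs)
            (hT.continuousAt (Iio_mem_nhds hrs))).continuousAt
        exact ((hP.comp ((continuous_const.add continuous_id).continuousAt)).continuousWithinAt)
      have heq : EqOn (fun s => ∫ u in (r+s)..r, h u)
          (fun s => (∫ u in (0:ℝ)..r, h u) - ∫ u in (0:ℝ)..(r+s), h u) (Iic 0) := by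
        intro s hs
        have hs0 : s ≤ 0 := mem_Iic.1 hs
        have hrs : r + s < T := by linarith
        have := intervalIntegral.integral_add_adjacent_intervals
          (hInt 0 (r+s) hT0 hrs) (hInt (r+s) r hrs hrT)
        simp only
        linarith
      exact ((hcont.congr heq).aestronglyMeasurable measurableSet_Iic)
    · rw [ae_restrict_iff' measurableSet_Iic]
      filter_upwards with s hs
      have hs0 : s ≤ 0 := mem_Iic.1 hs
      rw [Real.norm_eq_abs]
      have hb : ∀ x ∈ Set.uIoc (r+s) r, ‖h x‖ ≤ C := by
        intro x hx
        have hx2 : x ≤ max (r+s) r := hx.2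
        have hmax : max (r+s) r = r := max_eq_right (by linarith)
        rw [Real.norm_eq_abs]
        exact hCb x (by rw [hmax] at hx2; linarith)
      have := intervalIntegral.norm_integral_le_of_norm_le_const hb
      rw [Real.norm_eq_abs] at this
      have habs : |r - (r+s)| = |s| := by
        rw [show r - (r+s) = -s by ring, abs_neg]
      rw [habs] at this
      calc |∫ u in (r+s)..r, h u| ≤ C * |s| := this
        _ ≤ C * |s| := le_refl _
  -- combine the two set integrals
  have hm0 : IntegrableOn (fun s => ∫ u in s..(0:ℝ), h u) (Iic 0) μ := by
    have := hmeas 0 le_rfl ht0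
    simpa [zero_add] using this
  rw [← integral_sub (hmeas t ht0 le_rfl) hm0]
  rw [setIntegral_congr_fun measurableSet_Iic
    (fun s hs => split s (mem_Iic.1 hs))]
  -- Fubini
  have hswap : (∫ s in Iic 0, (∫ u in (0:ℝ)..t, (h u - h (u+s))) ∂μ)
      = ∫ u in (0:ℝ)..t, (∫ s in Iic 0, (h u - h (u+s)) ∂μ) := by
    simp_rw [intervalIntegral.integral_of_le ht0]
    haveI : IsFiniteMeasure (volume.restrict (Ioc (0:ℝ) t)) :=
      ⟨by rw [Measure.restrict_apply_univ, Real.volume_Ioc]; exact ENNReal.ofReal_lt_top⟩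
    apply integral_integral_swap
    show Integrable (fun p : ℝ × ℝ => h p.2 - h (p.2 + p.1)) _
    apply Integrable.mono' (integrable_const (2*C))
    · rw [Measure.prod_restrict]
      apply ContinuousOn.aestronglyMeasurable _ (measurableSet_Iic.prod measurableSet_Ioc)
      apply ContinuousOn.sub
      · apply hT.comp continuous_snd.continuousOn
        rintro ⟨s, u⟩ ⟨hs, hu⟩
        exact mem_Iio.2 (lt_of_le_of_lt hu.2 htT)
      · apply hT.comp (continuous_snd.add continuous_fst).continuousOn
        rintro ⟨s, u⟩ ⟨hs, hu⟩
        have hs0 : s ≤ 0 := mem_Iic.1 hs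
        have hu2 : u ≤ t := hu.2
        simp only [mem_Iio]
        show u + s < T
        linarith
    · rw [Measure.prod_restrict, ae_restrict_iff' (measurableSet_Iic.prod measurableSet_Ioc)]
      filter_upwards with p hp
      obtain ⟨hs, hu⟩ := hp
      have hs0 : p.1 ≤ 0 := mem_Iic.1 hs
      have hu2 : p.2 ≤ t := hu.2
      rw [Real.norm_eq_abs]
      have b1 : |h p.2| ≤ C := hCb _ (by linarith)
      have b2 : |h (p.2 + p.1)| ≤ C := hCb _ (by linarith)
      calc |h p.2 - h (p.2 + p.1)| ≤ |h p.2| + |h (p.2 + p.1)| := abs_sub _ _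
        _ ≤ 2*C := by linarith
  rw [hswap]
  -- pointwise in u
  apply intervalIntegral.integral_congr
  intro u hu
  rw [uIcc_of_le ht0] at hu
  have hut' : u ≤ t' := le_trans hu.2 htt'.le
  have hint : IntegrableOn (fun s => h (u+s)) (Iic 0) μ :=
    intAux μ hμ1 hT ht'T hCb hut'
  simp only
  rw [integral_sub (integrable_const _) hint, setIntegral_const, measureReal_def, hμ1]
  simp

set_option maxHeartbeats 1000000 in
/-- Along any solution `z` of the compartmental system, the
total mass satisfies
`M(t, z_t) = M(0, z_0) + ∑_i ∫_0^t [Ĩ_i(s) - g̃_{0i}(s, z_i(s))] ds`, and in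
particular `(d/dt) M(t, z_t) = ∑_i [Ĩ_i(t) - g̃_{0i}(t, z_i(t))]`. -/
theorem statement15 (m : ℕ) (μ ν : Fin m → Fin m → Measure ℝ)
    (g : Fin (m+1) → Fin m → ℝ → ℝ → ℝ) (It : Fin m → ℝ → ℝ)
    (hC1 : C1cond m g It) (hC3 : C3cond m μ) (hC4 : C4cond m ν)
    (T : ℝ) (zz : ℝ → Fin m → ℝ)
    (hsol : IsSolOn m μ ν g It T zz) :
    ∀ t ∈ Set.Ico (0:ℝ) T,
      (Mass m μ ν g t (shift m zz t) = Mass m μ ν g 0 (shift m zz 0)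
        + ∫ s in (0:ℝ)..t, ∑ i : Fin m, (It i s - g 0 i s (zz s i))) ∧
      HasDerivWithinAt (fun τ => Mass m μ ν g τ (shift m zz τ))
        (∑ i : Fin m, (It i t - g 0 i t (zz t i))) (Set.Ico 0 T) t := by
  obtain ⟨hBU, hzc, hD⟩ := hsol
  obtain ⟨hg1, hg2, hg3, hg4, hg5, hg6, hg7, hI0, hIbd, hIuc⟩ := hC1
  obtain ⟨hμ1, hμ2, hμ3⟩ := hC3
  have gjc : ∀ (a : Fin (m+1)) (b : Fin m), Continuous fun p : ℝ × ℝ => g a b p.1 p.2 :=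
    fun a b => joint_cont_of_mono (fun t => (hg1 a b t).continuous) (hg3 a b) (hg6 a b)
  have hzb : ∀ b : Fin m, ContinuousOn (fun u => zz u b) (Iio T) :=
    fun b => (continuous_apply b).comp_continuousOn hzc
  have hHc : ∀ (a : Fin (m+1)) (b : Fin m),
      ContinuousOn (fun u => g a b u (zz u b)) (Iio T) := fun a b =>
    (gjc a b).comp_continuousOn' (continuousOn_id.prodMk (hzb b))
  have hItc : ∀ i, Continuous (It i) := by
    intro i
    rw [Metric.continuous_iff]
    intro x ε hε
    obtain ⟨δ, hδ, hd⟩ := hIuc i ε hε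
    exact ⟨δ, hδ, fun y hy => by rw [Real.dist_eq] at hy ⊢; exact hd y x hy⟩
  have hfc : ContinuousOn (fun s => ∑ i : Fin m, (It i s - g 0 i s (zz s i))) (Iio T) :=
    continuousOn_finset_sum _ fun i _ => ((hItc i).continuousOn).sub (hHc 0 i)
  have hMass : ∀ r : ℝ, Mass m μ ν g r (shift m zz r)
      = (∑ i : Fin m, Dop m ν (fun _ _ => 0) (shift m zz r) i)
        + ∑ i : Fin m, ∑ j : Fin m,
            ∫ s in Iic 0, (∫ u in (r+s)..r, g j.succ i u (zz u i)) ∂(μ j i) := by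
    intro r
    unfold Mass
    congr 1
    refine Finset.sum_congr rfl fun i _ => Finset.sum_congr rfl fun j _ => ?_
    refine setIntegral_congr_fun measurableSet_Iic fun s _ => ?_
    have := intervalIntegral.integral_comp_add_left (a := s) (b := (0:ℝ))
      (fun u => g j.succ i u (zz u i)) r
    simpa [shift] using this
  have key : ∀ t ∈ Set.Ico (0:ℝ) T,
      Mass m μ ν g t (shift m zz t) = Mass m μ ν g 0 (shift m zz 0)
        + ∫ s in (0:ℝ)..t, ∑ i : Fin m, (It i s - g 0 i s (zz s i)) := by
    rintro t ⟨ht0, htT⟩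
    set t' := (t + T) / 2 with ht'def
    have htt' : t < t' := by rw [ht'def]; linarith
    have ht'T : t' < T := by rw [ht'def]; linarith
    have htT' : t < T := htt'.trans ht'T
    have hsub : Icc (0:ℝ) t ⊆ Iio T := fun x hx => lt_of_le_of_lt hx.2 htT'
    obtain ⟨C0, hC0⟩ := hBU.1
    obtain ⟨C1', hC1'⟩ := (isCompact_Icc (a := (0:ℝ)) (b := t')).exists_bound_of_continuousOn
      (hzc.mono fun x hx => lt_of_le_of_lt hx.2 ht'T)
    have hR : ∀ u : ℝ, u ≤ t' → ∀ b : Fin m, |zz u b| ≤ max C0 C1' := by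
      intro u hu b
      have h1 : ‖zz u‖ ≤ max C0 C1' := by
        rcases le_or_gt u 0 with h | h
        · exact le_trans (hC0 u h) (le_max_left _ _)
        · exact le_trans (hC1' u ⟨h.le, hu⟩) (le_max_right _ _)
      calc |zz u b| = ‖zz u b‖ := (Real.norm_eq_abs _).symm
        _ ≤ ‖zz u‖ := norm_le_pi_norm _ b
        _ ≤ _ := h1
    have hCg : ∀ (a : Fin (m+1)) (b : Fin m),
        ∃ C : ℝ, 0 ≤ C ∧ ∀ u : ℝ, u ≤ t' → |g a b u (zz u b)| ≤ C := by
      intro a b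
      obtain ⟨C, hCnn, hC⟩ := bound_of_mono (hg2 a b) (hg6 a b) (max C0 C1')
      exact ⟨C, hCnn, fun u hu => hC u _ (hR u hu b)⟩
    choose Cg hCg0 hCgB using hCg
    have hdiff : ∀ i j : Fin m,
        (∫ s in Iic 0, (∫ u in (t+s)..t, g j.succ i u (zz u i)) ∂(μ j i))
          - (∫ s in Iic 0, (∫ u in s..(0:ℝ), g j.succ i u (zz u i)) ∂(μ j i))
        = ∫ u in (0:ℝ)..t, ((g j.succ i u (zz u i))
            - ∫ s in Iic 0, g j.succ i (u+s) (zz (u+s) i) ∂(μ j i)) :=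
      fun i j => massAux (μ j i) (hμ1 j i) (hμ2 j i) (hμ3 j i) (hHc j.succ i)
        ht0 htt' ht'T (hCg0 j.succ i) (hCgB j.succ i)
    have hDder : ∀ τ ∈ Ico (0:ℝ) T,
        HasDerivWithinAt (fun τ => ∑ i : Fin m, Dop m ν (fun _ _ => 0) (shift m zz τ) i)
          (∑ i : Fin m, Fcomp m μ g It τ (shift m zz τ) i) (Ico 0 T) τ := by
      intro τ hτ
      exact HasDerivWithinAt.fun_sum fun i _ => (hasDerivWithinAt_pi.1 (hD τ hτ)) i
    have hDcont : ContinuousOn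
        (fun τ => ∑ i : Fin m, Dop m ν (fun _ _ => 0) (shift m zz τ) i) (Icc 0 t) := by
      intro τ hτ
      exact ((hDder τ ⟨hτ.1, lt_of_le_of_lt hτ.2 htT'⟩).continuousWithinAt).mono
        fun x hx => ⟨hx.1, lt_of_le_of_lt hx.2 htT'⟩
    have hFeq : ∀ u : ℝ, (∑ i : Fin m, Fcomp m μ g It u (shift m zz u) i)
        = ∑ i : Fin m, (- g 0 i u (zz u i) - (∑ j : Fin m, g j.succ i u (zz u i))
            + (∑ j : Fin m, ∫ s in Iic 0, g i.succ j (u+s) (zz (u+s) j) ∂(μ i j))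
            + It i u) := by
      intro u
      refine Finset.sum_congr rfl fun i _ => ?_
      simp [Fcomp, shift, add_zero]
    have hFcont : ContinuousOn
        (fun u => ∑ i : Fin m, Fcomp m μ g It u (shift m zz u) i) (Icc 0 t) := by
      apply ContinuousOn.congr _ (fun u _ => hFeq u)
      apply continuousOn_finset_sum
      intro i _
      apply ContinuousOn.add
      apply ContinuousOn.add
      apply ContinuousOn.sub
      · exact ((hHc 0 i).mono hsub).neg
      · exact continuousOn_finset_sum _ fun j _ => (hHc j.succ i).mono hsub
      · apply continuousOn_finset_sum
        intro j _
        intro u hu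
        exact (contAux (μ i j) (hμ1 i j) (hHc i.succ j) ht'T (hCgB i.succ j)
          (lt_of_le_of_lt hu.2 htt')).continuousWithinAt
      · exact (hItc i).continuousOn
    have hFTC : (∫ u in (0:ℝ)..t, ∑ i : Fin m, Fcomp m μ g It u (shift m zz u) i)
        = (∑ i : Fin m, Dop m ν (fun _ _ => 0) (shift m zz t) i)
          - ∑ i : Fin m, Dop m ν (fun _ _ => 0) (shift m zz 0) i := by
      apply intervalIntegral.integral_eq_sub_of_hasDeriv_right_of_le ht0 hDcont
      · intro x hx
        have hx' : x ∈ Ico (0:ℝ) T := ⟨hx.1.le, hx.2.trans htT'⟩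
        apply (hDder x hx').mono_of_mem_nhdsWithin
        rw [mem_nhdsWithin]
        refine ⟨Ioo (x-1) T, isOpen_Ioo, ⟨by linarith [hx.1], hx.2.trans htT'⟩, ?_⟩
        rintro y ⟨hy1, hy2⟩
        exact ⟨(hx.1.trans hy2).le, hy1.2⟩
      · exact (by rw [uIcc_of_le ht0]; exact hFcont : ContinuousOn _ (uIcc 0 t)).intervalIntegrable
    have hGint : ∀ i j : Fin m, IntervalIntegrable
        (fun u => g j.succ i u (zz u i)
          - ∫ s in Iic 0, g j.succ i (u+s) (zz (u+s) i) ∂(μ j i)) volume 0 t := by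
      intro i j
      apply ContinuousOn.intervalIntegrable
      rw [uIcc_of_le ht0]
      apply ContinuousOn.sub ((hHc j.succ i).mono hsub)
      intro u hu
      exact (contAux (μ j i) (hμ1 j i) (hHc j.succ i) ht'T (hCgB j.succ i)
        (lt_of_le_of_lt hu.2 htt')).continuousWithinAt
    have hsum2 : (∑ i : Fin m, ∑ j : Fin m, ∫ u in (0:ℝ)..t,
          (g j.succ i u (zz u i)
            - ∫ s in Iic 0, g j.succ i (u+s) (zz (u+s) i) ∂(μ j i)))
        = ∫ u in (0:ℝ)..t, ∑ i : Fin m, ∑ j : Fin m,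
          (g j.succ i u (zz u i)
            - ∫ s in Iic 0, g j.succ i (u+s) (zz (u+s) i) ∂(μ j i)) := by
      have hGIi : ∀ i : Fin m, IntervalIntegrable (fun u => ∑ j : Fin m,
          (g j.succ i u (zz u i)
            - ∫ s in Iic 0, g j.succ i (u+s) (zz (u+s) i) ∂(μ j i))) volume 0 t :=
        by
          intro i
          have h := IntervalIntegrable.sum (f := fun j u => g j.succ i u (zz u i)
            - ∫ s in Iic 0, g j.succ i (u+s) (zz (u+s) i) ∂(μ j i))
            Finset.univ (fun j _ => hGint i j)
          rwa [Finset.sum_fn] at h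
      have e1 : ∀ i : Fin m, (∫ u in (0:ℝ)..t, ∑ j : Fin m,
            (g j.succ i u (zz u i)
              - ∫ s in Iic 0, g j.succ i (u+s) (zz (u+s) i) ∂(μ j i)))
          = ∑ j : Fin m, ∫ u in (0:ℝ)..t, (g j.succ i u (zz u i)
              - ∫ s in Iic 0, g j.succ i (u+s) (zz (u+s) i) ∂(μ j i)) :=
        fun i => intervalIntegral.integral_finset_sum
          (f := fun j u => g j.succ i u (zz u i)
            - ∫ s in Iic 0, g j.succ i (u+s) (zz (u+s) i) ∂(μ j i)) (fun j _ => hGint i j)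
      have e2 : (∫ u in (0:ℝ)..t, ∑ i : Fin m, ∑ j : Fin m,
            (g j.succ i u (zz u i)
              - ∫ s in Iic 0, g j.succ i (u+s) (zz (u+s) i) ∂(μ j i)))
          = ∑ i : Fin m, ∫ u in (0:ℝ)..t, ∑ j : Fin m,
            (g j.succ i u (zz u i)
              - ∫ s in Iic 0, g j.succ i (u+s) (zz (u+s) i) ∂(μ j i)) :=
        intervalIntegral.integral_finset_sum
          (f := fun i u => ∑ j : Fin m, (g j.succ i u (zz u i)
            - ∫ s in Iic 0, g j.succ i (u+s) (zz (u+s) i) ∂(μ j i))) (fun i _ => hGIi i)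
      exact Eq.trans (Finset.sum_congr rfl fun i _ => (e1 i).symm) e2.symm
    have hpt : ∀ u : ℝ, (∑ i : Fin m, Fcomp m μ g It u (shift m zz u) i)
        + (∑ i : Fin m, ∑ j : Fin m, (g j.succ i u (zz u i)
            - ∫ s in Iic 0, g j.succ i (u+s) (zz (u+s) i) ∂(μ j i)))
        = ∑ i : Fin m, (It i u - g 0 i u (zz u i)) := by
      intro u
      rw [hFeq u]
      have hcomm : (∑ i : Fin m, ∑ j : Fin m,
            ∫ s in Iic 0, g j.succ i (u+s) (zz (u+s) i) ∂(μ j i))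
          = ∑ i : Fin m, ∑ j : Fin m,
            ∫ s in Iic 0, g i.succ j (u+s) (zz (u+s) j) ∂(μ i j) := Finset.sum_comm
      simp only [Finset.sum_add_distrib, Finset.sum_sub_distrib, Finset.sum_neg_distrib]
      rw [hcomm]
      ring
    have hfinal : (∫ u in (0:ℝ)..t, ∑ i : Fin m, Fcomp m μ g It u (shift m zz u) i)
        + (∑ i : Fin m, ∑ j : Fin m, ∫ u in (0:ℝ)..t,
            (g j.succ i u (zz u i)
              - ∫ s in Iic 0, g j.succ i (u+s) (zz (u+s) i) ∂(μ j i)))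
        = ∫ u in (0:ℝ)..t, ∑ i : Fin m, (It i u - g 0 i u (zz u i)) := by
      have hFI : IntervalIntegrable
          (fun u => ∑ i : Fin m, Fcomp m μ g It u (shift m zz u) i) volume 0 t := by
        apply ContinuousOn.intervalIntegrable
        rw [uIcc_of_le ht0]
        exact hFcont
      have hGIi2 : ∀ i : Fin m, IntervalIntegrable (fun u => ∑ j : Fin m,
          (g j.succ i u (zz u i)
            - ∫ s in Iic 0, g j.succ i (u+s) (zz (u+s) i) ∂(μ j i))) volume 0 t := by
        intro i
        have h := IntervalIntegrable.sum (f := fun j u => g j.succ i u (zz u i)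
          - ∫ s in Iic 0, g j.succ i (u+s) (zz (u+s) i) ∂(μ j i))
          Finset.univ (fun j _ => hGint i j)
        rwa [Finset.sum_fn] at h
      have hGI : IntervalIntegrable (fun u => ∑ i : Fin m, ∑ j : Fin m,
          (g j.succ i u (zz u i)
            - ∫ s in Iic 0, g j.succ i (u+s) (zz (u+s) i) ∂(μ j i))) volume 0 t := by
        have h := IntervalIntegrable.sum (f := fun (i : Fin m) u => ∑ j : Fin m,
          (g j.succ i u (zz u i)
            - ∫ s in Iic 0, g j.succ i (u+s) (zz (u+s) i) ∂(μ j i)))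
          Finset.univ (fun i _ => hGIi2 i)
        rwa [Finset.sum_fn] at h
      rw [hsum2, ← intervalIntegral.integral_add hFI hGI]
      exact intervalIntegral.integral_congr fun u _ => hpt u
    have hA : (∑ i : Fin m, ∑ j : Fin m,
          ∫ s in Iic 0, (∫ u in (t+s)..t, g j.succ i u (zz u i)) ∂(μ j i))
        - (∑ i : Fin m, ∑ j : Fin m,
          ∫ s in Iic 0, (∫ u in s..(0:ℝ), g j.succ i u (zz u i)) ∂(μ j i))
        = ∑ i : Fin m, ∑ j : Fin m, ∫ u in (0:ℝ)..t,
            (g j.succ i u (zz u i)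
              - ∫ s in Iic 0, g j.succ i (u+s) (zz (u+s) i) ∂(μ j i)) := by
      rw [← Finset.sum_sub_distrib]
      refine Finset.sum_congr rfl fun i _ => ?_
      rw [← Finset.sum_sub_distrib]
      exact Finset.sum_congr rfl fun j _ => hdiff i j
    rw [hMass t, hMass 0]
    simp only [zero_add]
    linarith [hFTC, hA, hfinal]
  intro t ht
  refine ⟨key t ht, ?_⟩
  obtain ⟨ht0, htT⟩ := ht
  have hder : HasDerivAt (fun τ => Mass m μ ν g 0 (shift m zz 0)
      + ∫ s in (0:ℝ)..τ, ∑ i : Fin m, (It i s - g 0 i s (zz s i)))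
      (∑ i : Fin m, (It i t - g 0 i t (zz t i))) t := by
    apply HasDerivAt.const_add
    apply intervalIntegral.integral_hasDerivAt_right
    · apply ContinuousOn.intervalIntegrable
      apply hfc.mono
      intro x hx
      rw [uIcc_of_le ht0] at hx
      exact lt_of_le_of_lt hx.2 htT
    · exact hfc.stronglyMeasurableAtFilter isOpen_Iio t htT
    · exact hfc.continuousAt (Iio_mem_nhds htT)
  exact hder.hasDerivWithinAt.congr (fun y hy => key y hy) (key t ⟨ht0, htT⟩)
end

section
/- Consider the compartmental NFDE (d/dt) Dz_t = F(t, z_t) under (C1), (C3), (C4), (C5). Let x, y ∈ BU with x ≤_D y, and let z(·,x) and z(·,y) be the corresponding solutions with initial segments x and y at time 0. Then for each i ∈ {1,…,m} and each t ≥ 0 at which both solutions are defined: 0 ≤ D_i z_t(y) − D_i z_t(x) ≤ M(0,y) − M(0,x). -/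
open MeasureTheory Filter Set

open MeasureTheory Filter Set Topology

private lemma aux16_deriv_nonneg {f : ℝ → ℝ} (hm : Monotone f) (hd : Differentiable ℝ f)
    (x : ℝ) : 0 ≤ deriv f x := by
  have h := (hd x).hasDerivAt
  rw [hasDerivAt_iff_tendsto_slope] at h
  have h2 : Tendsto (slope f x) (𝓝[>] x) (𝓝 (deriv f x)) :=
    h.mono_left (nhdsWithin_mono _ (fun y hy => ne_of_gt hy))
  refine ge_of_tendsto h2 ?_
  filter_upwards [self_mem_nhdsWithin] with y hy
  have hxy : x < y := hy
  have hfy : f x ≤ f y := hm hxy.le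
  rw [slope_def_field]
  have hpos : (0:ℝ) < y - x := by linarith
  exact div_nonneg (by linarith) hpos.le

private lemma aux16_lip_bounds {f : ℝ → ℝ} (hf : Differentiable ℝ f) {c d : ℝ}
    (hc : ∀ v, c ≤ deriv f v) (hd : ∀ v, deriv f v ≤ d) {a b : ℝ} (hab : a ≤ b) :
    c * (b - a) ≤ f b - f a ∧ f b - f a ≤ d * (b - a) := by
  have hx1 : ∀ x : ℝ, HasDerivAt (fun v => f v - c * v) (deriv f x - c) x := by
    intro x
    have h := (hf x).hasDerivAt.sub (((hasDerivAt_id x).const_mul c)); rw [mul_one] at h; exact h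
  have hx2 : ∀ x : ℝ, HasDerivAt (fun v => d * v - f v) (d - deriv f x) x := by
    intro x
    have h := (((hasDerivAt_id x).const_mul d)).sub (hf x).hasDerivAt; rw [mul_one] at h; exact h
  have h1 : Monotone (fun v => f v - c * v) := by
    apply monotone_of_deriv_nonneg (fun x => (hx1 x).differentiableAt)
    intro x; rw [(hx1 x).deriv]; linarith [hc x]
  have h2 : Monotone (fun v => d * v - f v) := by
    apply monotone_of_deriv_nonneg (fun x => (hx2 x).differentiableAt)
    intro x; rw [(hx2 x).deriv]; linarith [hd x]
  constructor
  · have := h1 hab; simp only at this; nlinarith [this]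
  · have := h2 hab; simp only at this; nlinarith [this]

private lemma aux16_cont_comp {G : ℝ → ℝ → ℝ} {d : ℝ} (hd0 : 0 ≤ d)
    (hLip : ∀ t a b, |G t b - G t a| ≤ d * |b - a|)
    (hUC : ∀ v : ℝ, ∀ ε > (0:ℝ), ∃ δ > (0:ℝ), ∀ t t' : ℝ, |t - t'| < δ → |G t v - G t' v| < ε)
    {Z : ℝ → ℝ} {S : Set ℝ} (hZ : ContinuousOn Z S) :
    ContinuousOn (fun w => G w (Z w)) S := by
  intro w hw
  rw [Metric.continuousWithinAt_iff]
  intro ε hε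
  obtain ⟨δ₁, hδ₁, hδ₁'⟩ := hUC (Z w) (ε/2) (by linarith)
  have hZc := hZ w hw
  rw [Metric.continuousWithinAt_iff] at hZc
  have hden : (0:ℝ) < 2*(d+1) := by linarith
  obtain ⟨δ₂, hδ₂, hδ₂'⟩ := hZc (ε/(2*(d+1))) (div_pos hε hden)
  refine ⟨min δ₁ δ₂, lt_min hδ₁ hδ₂, fun {w'} hw' hww' => ?_⟩
  have h1 : dist w' w < δ₁ := lt_of_lt_of_le hww' (min_le_left _ _)
  have h2 : dist w' w < δ₂ := lt_of_lt_of_le hww' (min_le_right _ _)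
  have hZd := hδ₂' hw' h2
  have key : dist (G w' (Z w')) (G w (Z w)) ≤ |G w' (Z w') - G w' (Z w)| + |G w' (Z w) - G w (Z w)| := by
    rw [Real.dist_eq]
    have he : G w' (Z w') - G w (Z w) = (G w' (Z w') - G w' (Z w)) + (G w' (Z w) - G w (Z w)) := by ring
    rw [he]; exact abs_add_le _ _
  refine lt_of_le_of_lt key ?_
  have hb1 : |G w' (Z w') - G w' (Z w)| ≤ d * |Z w' - Z w| := hLip w' (Z w) (Z w')
  have hb2 : |G w' (Z w) - G w (Z w)| < ε/2 := hδ₁' w' w (by rw [← Real.dist_eq]; exact h1)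
  have hb3 : d * |Z w' - Z w| < ε/2 := by
    rw [Real.dist_eq] at hZd
    calc d * |Z w' - Z w| ≤ (d+1) * |Z w' - Z w| := by
            nlinarith [abs_nonneg (Z w' - Z w)]
      _ < (d+1) * (ε/(2*(d+1))) := by
            apply mul_lt_mul_of_pos_left hZd; linarith
      _ = ε/2 := by field_simp
  linarith

private lemma aux16_integrableOn_of_bdd {κ : Measure ℝ} (hκ : κ (Iic (0:ℝ)) ≠ ⊤) {f : ℝ → ℝ}
    (hf : ContinuousOn f (Iic 0)) {C : ℝ} (hC : ∀ s ≤ (0:ℝ), |f s| ≤ C) :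
    IntegrableOn f (Iic 0) κ := by
  have : IsFiniteMeasure (κ.restrict (Iic 0)) :=
    ⟨by rwa [Measure.restrict_apply_univ, lt_top_iff_ne_top]⟩
  refine ⟨hf.aestronglyMeasurable measurableSet_Iic, ?_⟩
  apply HasFiniteIntegral.of_bounded (C := C)
  filter_upwards [ae_restrict_mem measurableSet_Iic] with s hs
  simpa [Real.norm_eq_abs] using hC s hs

private lemma aux16_c5_integral {K c : ℝ} (hK : 0 ≤ K) (hc : 0 ≤ c) {νm μm : Measure ℝ}
    (hνfin : ∀ A : Set ℝ, νm A ≠ ⊤) (hμfin : ∀ A : Set ℝ, μm A ≠ ⊤)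
    (hcomp : ∀ A : Set ℝ, MeasurableSet A → K * (νm A).toReal ≤ c * (μm A).toReal)
    {f : ℝ → ℝ} (hf0 : ∀ s, 0 ≤ f s)
    (hfν : IntegrableOn f (Iic 0) νm) (hfμ : IntegrableOn f (Iic 0) μm) :
    K * ∫ s in Iic (0:ℝ), f s ∂νm ≤ c * ∫ s in Iic (0:ℝ), f s ∂μm := by
  have hmono : (ENNReal.ofReal K) • (νm.restrict (Iic 0)) ≤
      (ENNReal.ofReal c) • (μm.restrict (Iic 0)) := by
    rw [Measure.le_iff]
    intro A hA
    simp only [Measure.smul_apply, smul_eq_mul, Measure.restrict_apply hA]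
    have h1 := hcomp (A ∩ Iic 0) (hA.inter measurableSet_Iic)
    have h2 : ENNReal.ofReal K * νm (A ∩ Iic 0) = ENNReal.ofReal (K * (νm (A ∩ Iic 0)).toReal) := by
      rw [ENNReal.ofReal_mul hK, ENNReal.ofReal_toReal (hνfin _)]
    have h3 : ENNReal.ofReal c * μm (A ∩ Iic 0) = ENNReal.ofReal (c * (μm (A ∩ Iic 0)).toReal) := by
      rw [ENNReal.ofReal_mul hc, ENNReal.ofReal_toReal (hμfin _)]
    rw [h2, h3]
    exact ENNReal.ofReal_le_ofReal h1
  have hae : ∀ (κ : Measure ℝ), (0:ℝ→ℝ) ≤ᶠ[ae κ] f := fun κ => Eventually.of_forall hf0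
  rw [integral_eq_lintegral_of_nonneg_ae (hae _) hfν.1, integral_eq_lintegral_of_nonneg_ae (hae _) hfμ.1]
  have hKmul : K * (∫⁻ s, ENNReal.ofReal (f s) ∂(νm.restrict (Iic 0))).toReal =
      (ENNReal.ofReal K * ∫⁻ s, ENNReal.ofReal (f s) ∂(νm.restrict (Iic 0))).toReal := by
    rw [ENNReal.toReal_mul, ENNReal.toReal_ofReal hK]
  have hcmul : c * (∫⁻ s, ENNReal.ofReal (f s) ∂(μm.restrict (Iic 0))).toReal =
      (ENNReal.ofReal c * ∫⁻ s, ENNReal.ofReal (f s) ∂(μm.restrict (Iic 0))).toReal := by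
    rw [ENNReal.toReal_mul, ENNReal.toReal_ofReal hc]
  rw [hKmul, hcmul]
  have hlin : ENNReal.ofReal K * ∫⁻ s, ENNReal.ofReal (f s) ∂(νm.restrict (Iic 0)) ≤
      ENNReal.ofReal c * ∫⁻ s, ENNReal.ofReal (f s) ∂(μm.restrict (Iic 0)) := by
    rw [← smul_eq_mul, ← smul_eq_mul, ← lintegral_smul_measure, ← lintegral_smul_measure]
    exact lintegral_mono' hmono (le_refl _)
  exact ENNReal.toReal_mono (ENNReal.mul_ne_top ENNReal.ofReal_ne_top hfμ.lintegral_lt_top.ne) hlin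

private lemma aux16_slope (T0 : ℝ) {f : ℝ → ℝ} {f' : ℝ → ℝ} {w v c : ℝ}
    (h0 : 0 ≤ w) (hwv : w ≤ v) (hv : v < T0)
    (hf : ∀ u ∈ Icc w v, HasDerivWithinAt f (f' u) (Ico 0 T0) u)
    (hb : ∀ u ∈ Icc w v, -c ≤ f' u) :
    f w - c * (v - w) ≤ f v := by
  have hsub : Icc w v ⊆ Ico 0 T0 := fun u hu => ⟨le_trans h0 hu.1, lt_of_le_of_lt hu.2 hv⟩
  have hcont : ContinuousOn (fun u => f u + c * u) (Icc w v) := by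
    apply ContinuousOn.add _ (continuousOn_const.mul continuousOn_id)
    intro u hu
    exact ((hf u hu).continuousWithinAt).mono hsub
  have hmem : ∀ u, u ∈ Ioo w v → Ico 0 T0 ∈ 𝓝 u := by
    intro u hu
    exact mem_nhds_iff.2 ⟨Ioo 0 T0, Ioo_subset_Ico_self, isOpen_Ioo,
      ⟨lt_of_le_of_lt h0 hu.1, lt_trans hu.2 hv⟩⟩
  have hmon : MonotoneOn (fun u => f u + c * u) (Icc w v) := by
    apply monotoneOn_of_deriv_nonneg (convex_Icc w v) hcont
    · intro u hu
      rw [interior_Icc] at hu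
      have hdu : HasDerivAt f (f' u) u := (hf u ⟨hu.1.le, hu.2.le⟩).hasDerivAt (hmem u hu)
      exact (hdu.add (((hasDerivAt_id u).const_mul c))).differentiableAt.differentiableWithinAt
    · intro u hu
      rw [interior_Icc] at hu
      have hdu : HasDerivAt f (f' u) u := (hf u ⟨hu.1.le, hu.2.le⟩).hasDerivAt (hmem u hu)
      have hDu : HasDerivAt (fun u => f u + c * u) (f' u + c) u := by
        have h := hdu.add (((hasDerivAt_id u).const_mul c)); rw [mul_one] at h; exact h
      rw [hDu.deriv]
      linarith [hb u ⟨hu.1.le, hu.2.le⟩]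
  have := hmon (left_mem_Icc.2 hwv) (right_mem_Icc.2 hwv) hwv
  simp only at this
  nlinarith [this]


private lemma aux16_diff_bounds {f : ℝ → ℝ} (hf : Differentiable ℝ f) {c d : ℝ}
    (hc0 : 0 ≤ c) (hc : ∀ v, c ≤ deriv f v) (hd : ∀ v, deriv f v ≤ d) (a b : ℝ) :
    f b - f a ≤ d * max (b - a) 0 ∧ c * max (b - a) 0 - d * max (a - b) 0 ≤ f b - f a := by
  have hcd : c ≤ d := le_trans (hc 0) (hd 0)
  have hd0 : 0 ≤ d := le_trans hc0 hcd
  rcases le_total a b with hab | hba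
  · obtain ⟨h1, h2⟩ := aux16_lip_bounds hf hc hd hab
    have hm1 : max (b - a) 0 = b - a := max_eq_left (by linarith)
    have hm2 : max (a - b) 0 = 0 := max_eq_right (by linarith)
    rw [hm1, hm2]
    constructor <;> nlinarith
  · obtain ⟨h1, h2⟩ := aux16_lip_bounds hf hc hd hba
    have hm1 : max (b - a) 0 = 0 := max_eq_right (by linarith)
    have hm2 : max (a - b) 0 = a - b := max_eq_left (by linarith)
    rw [hm1, hm2]
    constructor <;> nlinarith

/-- Quantitative Neumann-series bound: a lower bound on `p = (I - ν∗)Δ` on a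
ray propagates to a lower bound on `Δ`. -/
private lemma aux16_neumann {m : ℕ} (ν : Fin m → Fin m → Measure ℝ)
    {r : ℝ} (hr1 : r < 1) (hr0 : 0 ≤ r)
    (hνfin : ∀ i j, ν i j (Iic 0) ≠ ⊤)
    (hrge : ∀ i, ∑ j, (ν i j (Iic 0)).toReal ≤ r)
    (Δ p : ℝ → Fin m → ℝ) (a : ℝ)
    (hint : ∀ u ≤ a, ∀ i j, IntegrableOn (fun s => Δ (u+s) j) (Iic 0) (ν i j))
    (hid : ∀ u ≤ a, ∀ i, p u i = Δ u i - ∑ j, ∫ s in Iic 0, Δ (u+s) j ∂(ν i j))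
    {C : ℝ} (hbdd : ∀ u ≤ a, ∀ j, |Δ u j| ≤ C)
    {P : ℝ} (hP : 0 ≤ P) (hp : ∀ v ≤ a, ∀ i, -P ≤ p v i) :
    ∀ u ≤ a, ∀ j, -(P/(1-r)) ≤ Δ u j := by
  intro u hu j
  have h1r : (0:ℝ) < 1 - r := by linarith
  set S : Set ℝ := {x | ∃ v ≤ a, ∃ j' : Fin m, x = Δ v j'} with hS
  have hne : S.Nonempty := ⟨Δ u j, u, hu, j, rfl⟩
  have hbb : BddBelow S := by
    refine ⟨-C, fun x hx => ?_⟩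
    obtain ⟨v, hv, j', rfl⟩ := hx
    linarith [abs_le.1 (hbdd v hv j')]
  set β := sInf S with hβdef
  have hβle : ∀ v ≤ a, ∀ j' : Fin m, β ≤ Δ v j' := fun v hv j' => csInf_le hbb ⟨v, hv, j', rfl⟩
  by_cases hβ : 0 ≤ β
  · have : -(P/(1-r)) ≤ 0 := neg_nonpos.2 (div_nonneg hP h1r.le)
    linarith [hβle u hu j]
  · push_neg at hβ
    have hkey : ∀ x ∈ S, -P + β * r ≤ x := by
      rintro x ⟨v, hv, j', rfl⟩
      have hidv := hid v hv j'
      have hsum : ∀ j'' : Fin m, β * (ν j' j'' (Iic 0)).toReal ≤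
          ∫ s in Iic 0, Δ (v+s) j'' ∂(ν j' j'') := by
        intro j''
        have hconst : IntegrableOn (fun _ : ℝ => β) (Iic 0) (ν j' j'') := by
          exact integrableOn_const (hνfin j' j'')
        have hmono := setIntegral_mono_on hconst (hint v hv j' j'') measurableSet_Iic
          (fun s hs => hβle (v+s) (by have : s ≤ 0 := hs; linarith) j'')
        rwa [setIntegral_const, smul_eq_mul, mul_comm] at hmono
      have hsum2 : β * r ≤ ∑ j'' : Fin m, ∫ s in Iic 0, Δ (v+s) j'' ∂(ν j' j'') := by
        calc β * r ≤ β * (∑ j'' : Fin m, (ν j' j'' (Iic 0)).toReal) := by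
              apply mul_le_mul_of_nonpos_left (hrge j') hβ.le
          _ = ∑ j'' : Fin m, β * (ν j' j'' (Iic 0)).toReal := Finset.mul_sum _ _ _
          _ ≤ _ := Finset.sum_le_sum (fun j'' _ => hsum j'')
      have hpv := hp v hv j'
      rw [hidv] at hpv
      linarith
    have hβge : -P + β * r ≤ β := le_csInf hne hkey
    have hfin : -(P/(1-r)) ≤ β := by
      have : -P / (1-r) ≤ β := by
        rw [div_le_iff₀ h1r]; nlinarith
      rwa [neg_div] at this
    linarith [hβle u hu j]



private lemma aux16_pipe_hasDeriv {T' a' : ℝ} (hT0 : 0 < T') (haT : a' < T')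
    {q : ℝ → ℝ} (hq : ContinuousOn q (Iio T')) {Cq : ℝ} (hCq : ∀ w ≤ a', |q w| ≤ Cq)
    {μm : Measure ℝ} (hμ1 : μm (Iic 0) = 1)
    (hμabs : IntegrableOn (fun s : ℝ => |s|) (Iic 0) μm)
    {u₀ : ℝ} (h0a : u₀ < a') :
    HasDerivAt (fun u => ∫ s in Iic (0:ℝ), ((∫ w in (0:ℝ)..u, q w) - ∫ w in (0:ℝ)..(u+s), q w) ∂μm)
      (q u₀ - ∫ s in Iic (0:ℝ), q (u₀+s) ∂μm) u₀ := by
  have hCq0 : 0 ≤ Cq := le_trans (abs_nonneg _) (hCq a' le_rfl)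
  set Q : ℝ → ℝ := fun v => ∫ w in (0:ℝ)..v, q w with hQdef
  have huT : u₀ < T' := lt_trans h0a haT
  have hII : ∀ v : ℝ, v < T' → IntervalIntegrable q volume 0 v := by
    intro v hv
    apply (hq.mono ?_).intervalIntegrable
    intro w hw
    rcases Set.mem_uIcc.1 hw with ⟨h1, h2⟩ | ⟨h1, h2⟩
    · exact lt_of_le_of_lt h2 hv
    · exact lt_of_le_of_lt h2 hT0
  have hQder : ∀ v : ℝ, v < T' → HasDerivAt Q (q v) v := by
    intro v hv
    exact intervalIntegral.integral_hasDerivAt_right (hII v hv)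
      (hq.stronglyMeasurableAtFilter isOpen_Iio v hv)
      (hq.continuousAt (isOpen_Iio.mem_nhds hv))
  have hQdiff : ∀ v₁ v₂ : ℝ, v₁ < T' → v₂ < T' → Q v₂ - Q v₁ = ∫ w in v₁..v₂, q w :=
    fun v₁ v₂ h1 h2 => intervalIntegral.integral_interval_sub_left (hII v₂ h2) (hII v₁ h1)
  have hQlip : ∀ v₁ v₂ : ℝ, v₁ ≤ a' → v₂ ≤ a' → |Q v₂ - Q v₁| ≤ Cq * |v₂ - v₁| := by
    intro v₁ v₂ h1 h2
    rw [hQdiff v₁ v₂ (lt_of_le_of_lt h1 haT) (lt_of_le_of_lt h2 haT)]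
    have := intervalIntegral.norm_integral_le_of_norm_le_const (f := q) (a := v₁) (b := v₂)
      (C := Cq) ?_
    · simpa [Real.norm_eq_abs] using this
    · intro w hw
      rw [Real.norm_eq_abs]
      apply hCq
      rcases Set.mem_uIoc.1 hw with ⟨h3, h4⟩ | ⟨h3, h4⟩
      · exact le_trans h4 h2
      · exact le_trans h4 h1
  have hQcontAt : ∀ v : ℝ, v < T' → ContinuousAt Q v := fun v hv => (hQder v hv).continuousAt
  set ε : ℝ := a' - u₀ with hεdef
  have hε : 0 < ε := by linarith
  have hQcomp_cont : ∀ x : ℝ, x ≤ a' → ContinuousOn (fun s : ℝ => Q (x+s)) (Iic 0) := by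
    intro x hx s hs
    apply ContinuousAt.continuousWithinAt
    have hxs : x + s < T' := by
      have : s ≤ 0 := hs
      have : x + s ≤ a' := by linarith
      linarith
    exact (hQcontAt (x+s) hxs).comp (by fun_prop)
  have hμfin : IsFiniteMeasure (μm.restrict (Iic 0)) :=
    ⟨by rw [Measure.restrict_apply_univ, hμ1]; exact ENNReal.one_lt_top⟩
  have hqint : ∀ x : ℝ, x ≤ a' → IntegrableOn (fun s => q (x + s)) (Iic 0) μm := by
    intro x hx
    refine ⟨?_, ?_⟩
    · apply ContinuousOn.aestronglyMeasurable _ measurableSet_Iic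
      intro s hs
      apply ContinuousAt.continuousWithinAt
      have hxs : x + s < T' := by
        have : s ≤ 0 := hs; linarith
      exact (hq.continuousAt (isOpen_Iio.mem_nhds hxs)).comp (by fun_prop)
    · apply HasFiniteIntegral.of_bounded (C := Cq)
      filter_upwards [ae_restrict_mem measurableSet_Iic] with s hs
      rw [Real.norm_eq_abs]
      exact hCq (x+s) (by have : s ≤ 0 := hs; linarith)
  have main := hasDerivAt_integral_of_dominated_loc_of_lip
    (F := fun (x : ℝ) (s : ℝ) => Q x - Q (x + s))
    (F' := fun s => q u₀ - q (u₀ + s))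
    (μ := μm.restrict (Iic 0)) (x₀ := u₀)
    (bound := fun _ => 2 * Cq) (s := Metric.ball u₀ ε) (Metric.ball_mem_nhds u₀ hε) ?_ ?_ ?_ ?_ ?_ ?_
  · obtain ⟨hint', hD⟩ := main
    have heq : ∫ s in Iic (0:ℝ), (q u₀ - q (u₀ + s)) ∂μm
        = q u₀ - ∫ s in Iic (0:ℝ), q (u₀+s) ∂μm := by
      rw [integral_sub (integrable_const _) (hqint u₀ h0a.le)]
      congr 1
      rw [setIntegral_const]
      rw [Measure.real, hμ1]
      simp
    rw [heq] at hD
    exact hD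
  · filter_upwards [eventually_lt_nhds h0a] with x hx
    apply ContinuousOn.aestronglyMeasurable _ measurableSet_Iic
    exact continuousOn_const.sub (hQcomp_cont x hx.le)
  · apply Integrable.mono' (hμabs.const_mul Cq)
    · apply ContinuousOn.aestronglyMeasurable _ measurableSet_Iic
      exact continuousOn_const.sub (hQcomp_cont u₀ h0a.le)
    · filter_upwards [ae_restrict_mem measurableSet_Iic] with s hs
      have hs0 : s ≤ 0 := hs
      rw [Real.norm_eq_abs]
      have := hQlip (u₀ + s) u₀ (by linarith) h0a.le
      calc |Q u₀ - Q (u₀+s)| ≤ Cq * |u₀ - (u₀+s)| := this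
        _ = Cq * |s| := by rw [show u₀ - (u₀+s) = -s by ring, abs_neg]
  · apply ContinuousOn.aestronglyMeasurable _ measurableSet_Iic
    apply continuousOn_const.sub
    intro s hs
    apply ContinuousAt.continuousWithinAt
    have hxs : u₀ + s < T' := by have : s ≤ 0 := hs; linarith
    exact (hq.continuousAt (isOpen_Iio.mem_nhds hxs)).comp (by fun_prop)
  · filter_upwards [ae_restrict_mem measurableSet_Iic] with s hs
    have hs0 : s ≤ 0 := hs
    apply LipschitzOnWith.of_dist_le_mul
    intro x hx y hy
    have hxb : x ≤ a' := by
      have := abs_lt.1 (mem_ball_iff_norm.1 hx); simp [Real.norm_eq_abs] at this ⊢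
      rcases this with ⟨h1, h2⟩; linarith
    have hyb : y ≤ a' := by
      have := abs_lt.1 (mem_ball_iff_norm.1 hy); simp [Real.norm_eq_abs] at this ⊢
      rcases this with ⟨h1, h2⟩; linarith
    have h1 := hQlip y x hyb hxb
    have h2 := hQlip (y+s) (x+s) (by linarith) (by linarith)
    rw [Real.dist_eq, Real.dist_eq]
    have hcoe : ((Real.nnabs (2*Cq)) : ℝ) = 2*Cq := by
      rw [Real.coe_nnabs]; exact abs_of_nonneg (by linarith)
    rw [hcoe]
    have hxy : x + s - (y + s) = x - y := by ring
    calc |Q x - Q (x+s) - (Q y - Q (y+s))| ≤ |Q x - Q y| + |Q (x+s) - Q (y+s)| := by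
          have : Q x - Q (x+s) - (Q y - Q (y+s)) = (Q x - Q y) - (Q (x+s) - Q (y+s)) := by ring
          rw [this]; exact abs_sub _ _
      _ ≤ Cq * |x - y| + Cq * |x + s - (y+s)| := add_le_add h1 h2
      _ = 2 * Cq * |x - y| := by rw [hxy]; ring
  · exact integrable_const _
  · filter_upwards [ae_restrict_mem measurableSet_Iic] with s hs
    have hs0 : s ≤ 0 := hs
    have hd1 : HasDerivAt Q (q u₀) u₀ := hQder u₀ huT
    have hd2 : HasDerivAt (fun x : ℝ => Q (x + s)) (q (u₀ + s)) u₀ := by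
      have h := (hQder (u₀+s) (by linarith)).comp u₀ ((hasDerivAt_id u₀).add_const s)
      rw [mul_one] at h; exact h
    exact hd1.sub hd2


private lemma aux16_Qdiff {T' : ℝ} (hT0 : 0 < T') {q : ℝ → ℝ} (hq : ContinuousOn q (Iio T'))
    {v₁ v₂ : ℝ} (h1 : v₁ < T') (h2 : v₂ < T') :
    (∫ w in (0:ℝ)..v₂, q w) - ∫ w in (0:ℝ)..v₁, q w = ∫ w in v₁..v₂, q w := by
  have hII : ∀ v : ℝ, v < T' → IntervalIntegrable q volume 0 v := by
    intro v hv
    apply (hq.mono ?_).intervalIntegrable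
    intro w hw
    rcases Set.mem_uIcc.1 hw with ⟨ha, hb⟩ | ⟨ha, hb⟩
    · exact lt_of_le_of_lt hb hv
    · exact lt_of_le_of_lt hb hT0
  exact intervalIntegral.integral_interval_sub_left (hII v₂ h2) (hII v₁ h1)

private lemma aux16_pipe_integrableOn {T' a' : ℝ} (hT0 : 0 < T') (haT : a' < T')
    {q : ℝ → ℝ} (hq : ContinuousOn q (Iio T')) {Cq : ℝ} (hCq : ∀ w ≤ a', |q w| ≤ Cq)
    {μm : Measure ℝ} (hμ1 : μm (Iic 0) = 1)
    (hμabs : IntegrableOn (fun s : ℝ => |s|) (Iic 0) μm)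
    {u : ℝ} (hu : u ≤ a') :
    IntegrableOn (fun s => (∫ w in (0:ℝ)..u, q w) - ∫ w in (0:ℝ)..(u+s), q w) (Iic 0) μm := by
  have huT : u < T' := lt_of_le_of_lt hu haT
  have hQc : ∀ v : ℝ, v < T' → ContinuousAt (fun v' => ∫ w in (0:ℝ)..v', q w) v := by
    intro v hv
    have hII : IntervalIntegrable q volume 0 v := by
      apply (hq.mono ?_).intervalIntegrable
      intro w hw
      rcases Set.mem_uIcc.1 hw with ⟨ha, hb⟩ | ⟨ha, hb⟩
      · exact lt_of_le_of_lt hb hv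
      · exact lt_of_le_of_lt hb hT0
    exact (intervalIntegral.integral_hasDerivAt_right hII
      (hq.stronglyMeasurableAtFilter isOpen_Iio v hv)
      (hq.continuousAt (isOpen_Iio.mem_nhds hv))).continuousAt
  have hμfin : IsFiniteMeasure (μm.restrict (Iic 0)) :=
    ⟨by rw [Measure.restrict_apply_univ, hμ1]; exact ENNReal.one_lt_top⟩
  refine Integrable.mono' (g := fun s => Cq * |s|) (hμabs.const_mul Cq) ?_ ?_
  · apply ContinuousOn.aestronglyMeasurable _ measurableSet_Iic
    apply continuousOn_const.sub
    intro s hs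
    have hs0 : s ≤ (0:ℝ) := hs
    exact ((hQc (u+s) (by linarith)).comp (by fun_prop)).continuousWithinAt
  · filter_upwards [ae_restrict_mem measurableSet_Iic] with s hs
    have hs0 : s ≤ (0:ℝ) := hs
    rw [Real.norm_eq_abs, aux16_Qdiff hT0 hq (by linarith : u + s < T') huT]
    have hb := intervalIntegral.norm_integral_le_of_norm_le_const (f := q)
      (a := u+s) (b := u) (C := Cq) ?_
    · calc |∫ w in (u+s)..u, q w| ≤ Cq * |u - (u+s)| := by
            simpa [Real.norm_eq_abs] using hb
        _ = Cq * |s| := by rw [show u - (u+s) = -s by ring, abs_neg]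
    · intro w hw
      rw [Real.norm_eq_abs]
      apply hCq
      rcases Set.mem_uIoc.1 hw with ⟨ha, hb'⟩ | ⟨ha, hb'⟩
      · linarith
      · linarith


set_option maxHeartbeats 2000000 in
/-- (Lemma 4.4.) If `x ≤_D y` in `BU`, then along the
corresponding solutions, `0 ≤ D_i z_t(y) - D_i z_t(x) ≤ M(0,y) - M(0,x)` for
each `i` and each `t ≥ 0` at which both solutions are defined. -/
theorem statement16 (m : ℕ) (μ ν : Fin m → Fin m → Measure ℝ)
    (g : Fin (m+1) → Fin m → ℝ → ℝ → ℝ) (It : Fin m → ℝ → ℝ)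
    (cc dd : Fin (m+1) → Fin m → ℝ)
    (hC1 : C1cond m g It) (hC3 : C3cond m μ) (hC4 : C4cond m ν)
    (hcd : CDcond m g cc dd) (hC5 : C5cond m μ ν cc dd)
    (x y : ℝ → Fin m → ℝ) (hx : IsBU m x) (hy : IsBU m y)
    (hxy : leD m ν (fun _ _ => 0) x y)
    (Tx Ty : ℝ) (zx zy : ℝ → Fin m → ℝ)
    (hzx : IsSolOn m μ ν g It Tx zx) (hzx0 : ∀ s : ℝ, s ≤ 0 → zx s = x s)
    (hzy : IsSolOn m μ ν g It Ty zy) (hzy0 : ∀ s : ℝ, s ≤ 0 → zy s = y s)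
    (i : Fin m) (t : ℝ) (ht0 : 0 ≤ t) (htx : t < Tx) (hty : t < Ty) :
    0 ≤ Dop m ν (fun _ _ => 0) (shift m zy t) i
        - Dop m ν (fun _ _ => 0) (shift m zx t) i ∧
      Dop m ν (fun _ _ => 0) (shift m zy t) i
        - Dop m ν (fun _ _ => 0) (shift m zx t) i ≤
        Mass m μ ν g 0 y - Mass m μ ν g 0 x := by
  obtain ⟨hC1a, hC1b, hC1c, hC1d, hC1e, hC1mono, hC1zero, hIt0, hItb, hItuc⟩ := hC1
  obtain ⟨hμ1, hμIoi, hμabs⟩ := hC3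
  obtain ⟨hνfin, hνIoi, hν0, hνsum⟩ := hC4
  obtain ⟨hglb, hlub⟩ := hcd
  -- time horizon
  set T0 : ℝ := min Tx Ty with hT0def
  have htT0 : t < T0 := lt_min htx hty
  have hT0pos : 0 < T0 := lt_of_le_of_lt ht0 htT0
  set a' : ℝ := (t + T0)/2 with ha'def
  have hta' : t < a' := by simp only [ha'def]; linarith
  have ha'T : a' < T0 := by simp only [ha'def]; linarith
  -- basic facts about g
  have hgdiff : ∀ (k : Fin (m+1)) (i' : Fin m) (τ : ℝ), Differentiable ℝ (g k i' τ) :=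
    fun k i' τ => (hC1a k i' τ).differentiable one_ne_zero
  have hccle : ∀ (k : Fin (m+1)) (i' : Fin m) (τ v : ℝ), cc k i' ≤ deriv (g k i' τ) v :=
    fun k i' τ v => (hglb k i').1 ⟨τ, v, rfl⟩
  have hddge : ∀ (k : Fin (m+1)) (i' : Fin m) (τ v : ℝ), deriv (g k i' τ) v ≤ dd k i' :=
    fun k i' τ v => (hlub k i').1 ⟨τ, v, rfl⟩
  have hcc0 : ∀ (k : Fin (m+1)) (i' : Fin m), 0 ≤ cc k i' := by
    intro k i'
    apply (hglb k i').2
    rintro w ⟨τ, v, rfl⟩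
    exact aux16_deriv_nonneg (hC1mono k i' τ) (hgdiff k i' τ) v
  have hdd0 : ∀ (k : Fin (m+1)) (i' : Fin m), 0 ≤ dd k i' :=
    fun k i' => le_trans (hcc0 k i') (le_trans (hccle k i' 0 0) (hddge k i' 0 0))
  have hgb : ∀ (k : Fin (m+1)) (i' : Fin m) (τ a b : ℝ),
      g k i' τ b - g k i' τ a ≤ dd k i' * max (b-a) 0 ∧
      cc k i' * max (b-a) 0 - dd k i' * max (a-b) 0 ≤ g k i' τ b - g k i' τ a :=
    fun k i' τ a b => aux16_diff_bounds (hgdiff k i' τ) (hcc0 k i') (hccle k i' τ) (hddge k i' τ) a b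
  have hglip : ∀ (k : Fin (m+1)) (i' : Fin m) (τ a b : ℝ),
      |g k i' τ b - g k i' τ a| ≤ dd k i' * |b - a| := by
    intro k i' τ a b
    rcases le_total a b with h|h
    · obtain ⟨h1, h2⟩ := aux16_lip_bounds (hgdiff k i' τ) (hccle k i' τ) (hddge k i' τ) h
      rw [abs_of_nonneg (sub_nonneg.2 h), abs_le]
      constructor
      · nlinarith [mul_nonneg (hcc0 k i') (sub_nonneg.2 h), mul_nonneg (hdd0 k i') (sub_nonneg.2 h)]
      · exact h2
    · obtain ⟨h1, h2⟩ := aux16_lip_bounds (hgdiff k i' τ) (hccle k i' τ) (hddge k i' τ) h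
      rw [abs_sub_comm, abs_sub_comm b a, abs_of_nonneg (sub_nonneg.2 h), abs_le]
      constructor
      · nlinarith [mul_nonneg (hcc0 k i') (sub_nonneg.2 h), mul_nonneg (hdd0 k i') (sub_nonneg.2 h)]
      · exact h2
  have hgabs : ∀ (k : Fin (m+1)) (i' : Fin m) (τ v : ℝ), |g k i' τ v| ≤ dd k i' * |v| := by
    intro k i' τ v
    have h := hglip k i' τ 0 v
    rw [hC1zero k i' τ, sub_zero, sub_zero] at h
    exact h
  -- continuity of the solutions
  have hzxC : ContinuousOn zx (Iio T0) := hzx.2.1.mono (Iio_subset_Iio (min_le_left _ _))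
  have hzyC : ContinuousOn zy (Iio T0) := hzy.2.1.mono (Iio_subset_Iio (min_le_right _ _))
  have hzxCj : ∀ j', ContinuousOn (fun w => zx w j') (Iio T0) := by
    intro j' w hw
    exact (continuous_apply j').continuousAt.comp_continuousWithinAt (hzxC w hw)
  have hzyCj : ∀ j', ContinuousOn (fun w => zy w j') (Iio T0) := by
    intro j' w hw
    exact (continuous_apply j').continuousAt.comp_continuousWithinAt (hzyC w hw)
  -- uniform bound on (-∞, a']
  obtain ⟨Cb, hCb0, hCb⟩ : ∃ C : ℝ, 0 ≤ C ∧ ∀ s ≤ a', ∀ j', |zx s j'| ≤ C ∧ |zy s j'| ≤ C := by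
    obtain ⟨Cx, hCx⟩ := hzx.1.1
    obtain ⟨Cy, hCy⟩ := hzy.1.1
    obtain ⟨Cx', hCx'⟩ := (isCompact_Icc (a := (0:ℝ)) (b := a')).exists_bound_of_continuousOn
      (hzxC.mono (fun w hw => lt_of_le_of_lt hw.2 ha'T))
    obtain ⟨Cy', hCy'⟩ := (isCompact_Icc (a := (0:ℝ)) (b := a')).exists_bound_of_continuousOn
      (hzyC.mono (fun w hw => lt_of_le_of_lt hw.2 ha'T))
    have hCx0 : (0:ℝ) ≤ Cx := le_trans (norm_nonneg _) (hCx 0 le_rfl)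
    refine ⟨max (max Cx Cy) (max Cx' Cy'), le_trans hCx0 (le_trans (le_max_left _ _) (le_max_left _ _)), ?_⟩
    intro s hs j'
    have hax : |zx s j'| ≤ ‖zx s‖ := by
      rw [← Real.norm_eq_abs]; exact norm_le_pi_norm (zx s) j'
    have hay : |zy s j'| ≤ ‖zy s‖ := by
      rw [← Real.norm_eq_abs]; exact norm_le_pi_norm (zy s) j'
    constructor
    · rcases le_total s 0 with h|h
      · exact le_trans hax (le_trans (hCx s h)
          (le_trans (le_max_left _ _) (le_max_left _ _)))
      · exact le_trans hax (le_trans (hCx' s ⟨h, hs⟩)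
          (le_trans (le_max_left _ _) (le_max_right _ _)))
    · rcases le_total s 0 with h|h
      · exact le_trans hay (le_trans (hCy s h)
          (le_trans (le_max_right _ _) (le_max_left _ _)))
      · exact le_trans hay (le_trans (hCy' s ⟨h, hs⟩)
          (le_trans (le_max_right _ _) (le_max_right _ _)))
  -- the difference functions
  set Δ : ℝ → Fin m → ℝ := fun u j' => zy u j' - zx u j' with hΔdef
  set p : ℝ → Fin m → ℝ := fun u i' =>
    Dop m ν (fun _ _ => 0) (shift m zy u) i' - Dop m ν (fun _ _ => 0) (shift m zx u) i' with hpdef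
  have hΔbd : ∀ s ≤ a', ∀ j', |Δ s j'| ≤ 2*Cb := by
    intro s hs j'
    obtain ⟨h1, h2⟩ := hCb s hs j'
    simp only [hΔdef]
    calc |zy s j' - zx s j'| ≤ |zy s j'| + |zx s j'| := abs_sub _ _
      _ ≤ 2*Cb := by linarith
  have hΔCj : ∀ j', ContinuousOn (fun w => Δ w j') (Iio T0) := by
    intro j'
    simp only [hΔdef]
    exact (hzyCj j').sub (hzxCj j')
  -- finiteness of measures
  have hμIic : ∀ i' j', (μ i' j') (Iic 0) ≠ ⊤ := fun i' j' => by
    rw [hμ1 i' j']; exact ENNReal.one_ne_top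
  have hμA : ∀ i' j' (A : Set ℝ), (μ i' j') A ≠ ⊤ := by
    intro i' j' A
    have h2 : (μ i' j') univ ≤ (μ i' j') (Iic 0) + (μ i' j') (Ioi 0) := by
      rw [← Iic_union_Ioi (a := (0:ℝ))]
      exact measure_union_le _ _
    rw [hμ1, hμIoi, add_zero] at h2
    exact ne_top_of_le_ne_top (ne_top_of_le_ne_top ENNReal.one_ne_top h2)
      (measure_mono (subset_univ A))
  have hνA : ∀ i' j' (A : Set ℝ), (ν i' j') A ≠ ⊤ := fun i' j' A =>
    ne_top_of_le_ne_top (hνfin i' j') (measure_mono (subset_univ _))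
  have hνIic : ∀ i' j', (ν i' j') (Iic 0) ≠ ⊤ := fun i' j' => hνA i' j' _
  -- integrability toolkit
  have haus : ∀ {u s : ℝ}, u ≤ a' → s ∈ Iic (0:ℝ) → u + s ≤ a' := by
    intro u s hu hs
    have : s ≤ 0 := hs
    linarith
  have hshiftC : ∀ (f : ℝ → ℝ), ContinuousOn f (Iio T0) → ∀ u, u ≤ a' →
      ContinuousOn (fun s => f (u+s)) (Iic 0) := by
    intro f hf u hu
    apply hf.comp (continuous_const.add continuous_id).continuousOn
    intro s hs
    exact lt_of_le_of_lt (haus hu hs) ha'T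
  have hIgen : ∀ (f : ℝ → ℝ), ContinuousOn f (Iio T0) → ∀ (C : ℝ), (∀ s ≤ a', |f s| ≤ C) →
      ∀ (κ : Measure ℝ), κ (Iic 0) ≠ ⊤ → ∀ u, u ≤ a' →
      IntegrableOn (fun s => f (u+s)) (Iic 0) κ := by
    intro f hf C hC κ hκ u hu
    apply aux16_integrableOn_of_bdd hκ (hshiftC f hf u hu)
    intro s hs
    exact hC (u+s) (haus hu hs)
  -- continuity of the composite transport terms
  have hqyC : ∀ (k : Fin (m+1)) (i'' : Fin m),
      ContinuousOn (fun w => g k i'' w (zy w i'')) (Iio T0) := fun k i'' =>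
    aux16_cont_comp (hdd0 k i'') (fun τ a b => hglip k i'' τ a b) (hC1c k i'') (hzyCj i'')
  have hqxC : ∀ (k : Fin (m+1)) (i'' : Fin m),
      ContinuousOn (fun w => g k i'' w (zx w i'')) (Iio T0) := fun k i'' =>
    aux16_cont_comp (hdd0 k i'') (fun τ a b => hglip k i'' τ a b) (hC1c k i'') (hzxCj i'')
  have hqybd : ∀ (k : Fin (m+1)) (i'' : Fin m), ∀ w ≤ a', |g k i'' w (zy w i'')| ≤ dd k i'' * Cb := by
    intro k i'' w hw
    calc |g k i'' w (zy w i'')| ≤ dd k i'' * |zy w i''| := hgabs k i'' w _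
      _ ≤ dd k i'' * Cb := mul_le_mul_of_nonneg_left ((hCb w hw i'').2) (hdd0 k i'')
  have hqxbd : ∀ (k : Fin (m+1)) (i'' : Fin m), ∀ w ≤ a', |g k i'' w (zx w i'')| ≤ dd k i'' * Cb := by
    intro k i'' w hw
    calc |g k i'' w (zx w i'')| ≤ dd k i'' * |zx w i''| := hgabs k i'' w _
      _ ≤ dd k i'' * Cb := mul_le_mul_of_nonneg_left ((hCb w hw i'').1) (hdd0 k i'')
  -- the identity  p = Δ - ν∗Δ
  have hpid : ∀ u, u ≤ a' → ∀ i', p u i' = Δ u i' - ∑ j' : Fin m, ∫ s in Iic (0:ℝ), Δ (u+s) j' ∂(ν i' j') := by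
    intro u hu i'
    have hIy : ∀ j', IntegrableOn (fun s => zy (u+s) j') (Iic 0) (ν i' j') := fun j' =>
      hIgen (fun w => zy w j') (hzyCj j') Cb (fun s hs => (hCb s hs j').2) _ (hνIic i' j') u hu
    have hIx : ∀ j', IntegrableOn (fun s => zx (u+s) j') (Iic 0) (ν i' j') := fun j' =>
      hIgen (fun w => zx w j') (hzxCj j') Cb (fun s hs => (hCb s hs j').1) _ (hνIic i' j') u hu
    have hy2 : Dop m ν (fun _ _ => 0) (shift m zy u) i'
        = zy u i' - ∑ j' : Fin m, ∫ s in Iic (0:ℝ), zy (u+s) j' ∂(ν i' j') := by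
      simp only [Dop, shift, Measure.restrict_zero, integral_zero_measure, sub_zero, add_zero]
    have hx2 : Dop m ν (fun _ _ => 0) (shift m zx u) i'
        = zx u i' - ∑ j' : Fin m, ∫ s in Iic (0:ℝ), zx (u+s) j' ∂(ν i' j') := by
      simp only [Dop, shift, Measure.restrict_zero, integral_zero_measure, sub_zero, add_zero]
    have hsum : ∑ j' : Fin m, ∫ s in Iic (0:ℝ), Δ (u+s) j' ∂(ν i' j')
        = (∑ j' : Fin m, ∫ s in Iic (0:ℝ), zy (u+s) j' ∂(ν i' j'))
          - ∑ j' : Fin m, ∫ s in Iic (0:ℝ), zx (u+s) j' ∂(ν i' j') := by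
      rw [← Finset.sum_sub_distrib]
      refine Finset.sum_congr rfl (fun j' _ => ?_)
      rw [← integral_sub (hIy j') (hIx j')]
    simp only [hpdef, hΔdef]
    rw [hy2, hx2]
    simp only [hΔdef] at hsum
    rw [hsum]
    ring
  -- contraction constant of ν
  have huniv : (Finset.univ : Finset (Fin m)).Nonempty := ⟨i, Finset.mem_univ i⟩
  set r : ℝ := Finset.univ.sup' huniv (fun i' => ∑ j' : Fin m, ((ν i' j') (Iic 0)).toReal) with hrdef
  have hr1 : r < 1 := by
    rw [hrdef, Finset.sup'_lt_iff]
    exact fun i' _ => hνsum i'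
  have hrge : ∀ i', ∑ j' : Fin m, ((ν i' j') (Iic 0)).toReal ≤ r := by
    intro i'
    rw [hrdef]
    exact Finset.le_sup' (fun i'' : Fin m => ∑ j' : Fin m, ((ν i'' j') (Iic 0)).toReal) (Finset.mem_univ i')
  have hr0 : 0 ≤ r :=
    le_trans (Finset.sum_nonneg (fun j' _ => ENNReal.toReal_nonneg)) (hrge i)
  have h1r : (0:ℝ) < 1 - r := by linarith
  -- Neumann-series lower bound
  have hNeu : ∀ (P : ℝ), 0 ≤ P → ∀ a, a ≤ a' → (∀ v ≤ a, ∀ i', -P ≤ p v i') →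
      ∀ u ≤ a, ∀ j', -(P/(1-r)) ≤ Δ u j' := by
    intro P hP a ha hp
    exact aux16_neumann ν hr1 hr0 hνIic hrge Δ p a
      (fun u hu i' j' => hIgen (fun w => Δ w j') (hΔCj j') (2*Cb)
        (fun s hs => hΔbd s hs j') _ (hνIic i' j') u (le_trans hu ha))
      (fun u hu i' => hpid u (le_trans hu ha) i')
      (C := 2*Cb) (fun u hu j' => hΔbd u (le_trans hu ha) j') hP hp
  -- derivative of p
  have hpder : ∀ (i' : Fin m), ∀ u ∈ Ico 0 T0, HasDerivWithinAt (fun τ => p τ i')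
      (Fcomp m μ g It u (shift m zy u) i' - Fcomp m μ g It u (shift m zx u) i') (Ico 0 T0) u := by
    intro i' u hu
    have hy' := (hzy.2.2 u ⟨hu.1, lt_of_lt_of_le hu.2 (min_le_right Tx Ty)⟩).mono
      (Ico_subset_Ico_right (min_le_right Tx Ty))
    have hx' := (hzx.2.2 u ⟨hu.1, lt_of_lt_of_le hu.2 (min_le_left Tx Ty)⟩).mono
      (Ico_subset_Ico_right (min_le_left Tx Ty))
    exact ((hasDerivWithinAt_pi.1 hy' i').sub (hasDerivWithinAt_pi.1 hx' i'))
  -- the constant K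
  set KK : ℝ := 1 + ∑ i'' : Fin m, ∑ j' : Fin m, dd i''.succ j' with hKKdef
  have hKK1 : (1:ℝ) ≤ KK := by
    rw [hKKdef]
    have : (0:ℝ) ≤ ∑ i'' : Fin m, ∑ j' : Fin m, dd i''.succ j' :=
      Finset.sum_nonneg (fun i'' _ => Finset.sum_nonneg (fun j' _ => hdd0 _ _))
    linarith
  have hKKpos : (0:ℝ) < KK := lt_of_lt_of_le one_pos hKK1
  have hKKi : ∀ i' : Fin m, ∑ j' : Fin m, dd i'.succ j' ≤ KK := by
    intro i'
    rw [hKKdef]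
    have := Finset.single_le_sum (f := fun i'' => ∑ j' : Fin m, dd i''.succ j')
      (fun i'' _ => Finset.sum_nonneg (fun j' _ => hdd0 _ _)) (Finset.mem_univ i')
    linarith
  -- key derivative lower bound
  have hkey : ∀ (P : ℝ), 0 ≤ P → ∀ u, 0 ≤ u → u ≤ t → ∀ (i' : Fin m), p u i' ≤ 0 →
      (∀ v ≤ u, ∀ i'', -P ≤ p v i'') →
      -(KK * (P/(1-r))) ≤ Fcomp m μ g It u (shift m zy u) i' - Fcomp m μ g It u (shift m zx u) i' := by
    intro P hP u hu0 hut i' hpneg hhist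
    have hua' : u ≤ a' := le_trans hut hta'.le
    set Φ : ℝ := P/(1-r) with hΦdef
    have hΦ0 : 0 ≤ Φ := div_nonneg hP h1r.le
    have hΔlow : ∀ v ≤ u, ∀ j', -Φ ≤ zy v j' - zx v j' := by
      intro v hv j'
      have := hNeu P hP u hua' (fun v' hv' i'' => hhist v' hv' i'') v hv j'
      simpa only [hΔdef] using this
    -- integrability instances
    have hIgy : ∀ j', IntegrableOn (fun s => g i'.succ j' (u+s) (zy (u+s) j')) (Iic 0) (μ i' j') :=
      fun j' => hIgen (fun w => g i'.succ j' w (zy w j')) (hqyC i'.succ j')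
        (dd i'.succ j' * Cb) (hqybd i'.succ j') _ (hμIic i' j') u hua'
    have hIgx : ∀ j', IntegrableOn (fun s => g i'.succ j' (u+s) (zx (u+s) j')) (Iic 0) (μ i' j') :=
      fun j' => hIgen (fun w => g i'.succ j' w (zx w j')) (hqxC i'.succ j')
        (dd i'.succ j' * Cb) (hqxbd i'.succ j') _ (hμIic i' j') u hua'
    have hposbd : ∀ j' : Fin m, ∀ s, s ≤ a' → |max (zy s j' - zx s j') 0| ≤ 2*Cb := by
      intro j' s hs
      have h := hΔbd s hs j'
      simp only [hΔdef] at h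
      have h1 := abs_le.1 h
      rw [abs_le]
      refine ⟨le_trans (by linarith) (le_max_right _ _), max_le (by linarith) (by linarith)⟩
    have hnegbd : ∀ j' : Fin m, ∀ s, s ≤ a' → |max (zx s j' - zy s j') 0| ≤ 2*Cb := by
      intro j' s hs
      have h := hΔbd s hs j'
      simp only [hΔdef] at h
      have h1 := abs_le.1 h
      rw [abs_le]
      refine ⟨le_trans (by linarith) (le_max_right _ _), max_le (by linarith) (by linarith)⟩
    have hIpos : ∀ (κ : Measure ℝ), κ (Iic 0) ≠ ⊤ → ∀ j',
        IntegrableOn (fun s => max (zy (u+s) j' - zx (u+s) j') 0) (Iic 0) κ := by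
      intro κ hκ j'
      exact hIgen (fun w => max (zy w j' - zx w j') 0)
        (((hzyCj j').sub (hzxCj j')).sup continuousOn_const) (2*Cb) (hposbd j') κ hκ u hua'
    have hIneg : ∀ j', IntegrableOn (fun s => max (zx (u+s) j' - zy (u+s) j') 0) (Iic 0) (μ i' j') := by
      intro j'
      exact hIgen (fun w => max (zx w j' - zy w j') 0)
        (((hzxCj j').sub (hzyCj j')).sup continuousOn_const) (2*Cb) (hnegbd j') _ (hμIic i' j') u hua'
    have hIΔν : ∀ j', IntegrableOn (fun s => zy (u+s) j' - zx (u+s) j') (Iic 0) (ν i' j') := by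
      intro j'
      exact hIgen (fun w => zy w j' - zx w j') ((hzyCj j').sub (hzxCj j')) (2*Cb)
        (fun s hs => by have := hΔbd s hs j'; simpa only [hΔdef] using this) _ (hνIic i' j') u hua'
    -- step 1: lower bound for the inflow difference
    have hstep1 : ∀ j' : Fin m,
        cc i'.succ j' * (∫ s in Iic (0:ℝ), max (zy (u+s) j' - zx (u+s) j') 0 ∂(μ i' j'))
          - dd i'.succ j' * Φ
        ≤ (∫ s in Iic (0:ℝ), g i'.succ j' (u+s) (zy (u+s) j') ∂(μ i' j'))
          - ∫ s in Iic (0:ℝ), g i'.succ j' (u+s) (zx (u+s) j') ∂(μ i' j') := by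
      intro j'
      rw [← integral_sub (hIgy j') (hIgx j')]
      have hpt : ∀ s ∈ Iic (0:ℝ),
          cc i'.succ j' * max (zy (u+s) j' - zx (u+s) j') 0
            - dd i'.succ j' * max (zx (u+s) j' - zy (u+s) j') 0
          ≤ g i'.succ j' (u+s) (zy (u+s) j') - g i'.succ j' (u+s) (zx (u+s) j') :=
        fun s _ => (hgb i'.succ j' (u+s) (zx (u+s) j') (zy (u+s) j')).2
      have hf1 : IntegrableOn (fun s => cc i'.succ j' * max (zy (u+s) j' - zx (u+s) j') 0)
          (Iic 0) (μ i' j') := (hIpos _ (hμIic i' j') j').const_mul (cc i'.succ j')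
      have hf2 : IntegrableOn (fun s => dd i'.succ j' * max (zx (u+s) j' - zy (u+s) j') 0)
          (Iic 0) (μ i' j') := (hIneg j').const_mul (dd i'.succ j')
      have hfint : IntegrableOn (fun s => cc i'.succ j' * max (zy (u+s) j' - zx (u+s) j') 0
          - dd i'.succ j' * max (zx (u+s) j' - zy (u+s) j') 0) (Iic 0) (μ i' j') := hf1.sub hf2
      have hgint : IntegrableOn (fun s => g i'.succ j' (u+s) (zy (u+s) j')
          - g i'.succ j' (u+s) (zx (u+s) j')) (Iic 0) (μ i' j') := (hIgy j').sub (hIgx j')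
      have hmono := setIntegral_mono_on hfint hgint measurableSet_Iic hpt
      rw [integral_sub hf1 hf2, integral_const_mul, integral_const_mul] at hmono
      have hnegb : (∫ s in Iic (0:ℝ), max (zx (u+s) j' - zy (u+s) j') 0 ∂(μ i' j')) ≤ Φ := by
        have hptb : ∀ s ∈ Iic (0:ℝ), max (zx (u+s) j' - zy (u+s) j') 0 ≤ Φ := by
          intro s hs
          have hs0 : s ≤ (0:ℝ) := hs
          have := hΔlow (u+s) (by linarith) j'
          exact max_le (by linarith) hΦ0
        have hconst : IntegrableOn (fun _ : ℝ => Φ) (Iic 0) (μ i' j') := by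
          exact integrableOn_const (hμIic i' j')
        have := setIntegral_mono_on (hIneg j') hconst measurableSet_Iic hptb
        rwa [setIntegral_const, Measure.real, hμ1 i' j', ENNReal.toReal_one, one_smul] at this
      nlinarith [mul_le_mul_of_nonneg_left hnegb (hdd0 i'.succ j')]
    -- step 2: upper bound for the outflow difference
    have hsumdd0 : (0:ℝ) ≤ ∑ k : Fin (m+1), dd k i' :=
      Finset.sum_nonneg (fun k _ => hdd0 k i')
    have hRnn : (0:ℝ) ≤ ∑ j' : Fin m, ∫ s in Iic (0:ℝ), max (zy (u+s) j' - zx (u+s) j') 0 ∂(ν i' j') :=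
      Finset.sum_nonneg (fun j' _ => setIntegral_nonneg measurableSet_Iic
        (fun s _ => le_max_right _ _))
    have hstep2 : (g 0 i' u (zy u i') - g 0 i' u (zx u i'))
          + ∑ j' : Fin m, (g j'.succ i' u (zy u i') - g j'.succ i' u (zx u i'))
        ≤ (∑ k : Fin (m+1), dd k i')
          * ∑ j' : Fin m, ∫ s in Iic (0:ℝ), max (zy (u+s) j' - zx (u+s) j') 0 ∂(ν i' j') := by
      have hid := hpid u hua' i'
      simp only [hΔdef] at hid
      have hx1 : zy u i' - zx u i'
          ≤ ∑ j' : Fin m, ∫ s in Iic (0:ℝ), max (zy (u+s) j' - zx (u+s) j') 0 ∂(ν i' j') := by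
        have h2 : ∀ j' : Fin m, (∫ s in Iic (0:ℝ), (zy (u+s) j' - zx (u+s) j') ∂(ν i' j'))
            ≤ ∫ s in Iic (0:ℝ), max (zy (u+s) j' - zx (u+s) j') 0 ∂(ν i' j') :=
          fun j' => setIntegral_mono_on (hIΔν j') (hIpos _ (hνIic i' j') j')
            measurableSet_Iic (fun s _ => le_max_left _ _)
        have h3 := Finset.sum_le_sum (fun j' (_ : j' ∈ Finset.univ) => h2 j')
        linarith [hpneg, hid.symm.le, hid.le]
      have hposb : max (zy u i' - zx u i') 0
          ≤ ∑ j' : Fin m, ∫ s in Iic (0:ℝ), max (zy (u+s) j' - zx (u+s) j') 0 ∂(ν i' j') :=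
        max_le hx1 hRnn
      have h01 : g 0 i' u (zy u i') - g 0 i' u (zx u i')
          ≤ dd 0 i' * max (zy u i' - zx u i') 0 := (hgb 0 i' u _ _).1
      have h02 : ∀ j' : Fin m, g j'.succ i' u (zy u i') - g j'.succ i' u (zx u i')
          ≤ dd j'.succ i' * max (zy u i' - zx u i') 0 := fun j' => (hgb _ i' u _ _).1
      have hsumdd : ∑ k : Fin (m+1), dd k i' = dd 0 i' + ∑ j' : Fin m, dd j'.succ i' :=
        Fin.sum_univ_succ _
      calc (g 0 i' u (zy u i') - g 0 i' u (zx u i'))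
            + ∑ j' : Fin m, (g j'.succ i' u (zy u i') - g j'.succ i' u (zx u i'))
          ≤ dd 0 i' * max (zy u i' - zx u i') 0
            + ∑ j' : Fin m, dd j'.succ i' * max (zy u i' - zx u i') 0 :=
            add_le_add h01 (Finset.sum_le_sum (fun j' _ => h02 j'))
        _ = (∑ k : Fin (m+1), dd k i') * max (zy u i' - zx u i') 0 := by
            rw [hsumdd, ← Finset.sum_mul]; ring
        _ ≤ _ := mul_le_mul_of_nonneg_left hposb hsumdd0
    -- step 3 : (C5)
    have hstep3 : (∑ k : Fin (m+1), dd k i')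
          * ∑ j' : Fin m, ∫ s in Iic (0:ℝ), max (zy (u+s) j' - zx (u+s) j') 0 ∂(ν i' j')
        ≤ ∑ j' : Fin m, cc i'.succ j'
          * ∫ s in Iic (0:ℝ), max (zy (u+s) j' - zx (u+s) j') 0 ∂(μ i' j') := by
      rw [Finset.mul_sum]
      refine Finset.sum_le_sum (fun j' _ => ?_)
      exact aux16_c5_integral hsumdd0 (hcc0 i'.succ j') (hνA i' j') (hμA i' j')
        (hC5 i' j') (fun s => le_max_right _ _)
        (hIpos _ (hνIic i' j') j') (hIpos _ (hμIic i' j') j')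
    -- assemble
    simp only [Fcomp, shift, add_zero]
    have hBsub : (∑ j' : Fin m, g j'.succ i' u (zy u i')) - ∑ j' : Fin m, g j'.succ i' u (zx u i')
        = ∑ j' : Fin m, (g j'.succ i' u (zy u i') - g j'.succ i' u (zx u i')) :=
      (Finset.sum_sub_distrib _ _).symm
    have hCsub : (∑ j' : Fin m, ∫ s in Iic (0:ℝ), g i'.succ j' (u+s) (zy (u+s) j') ∂(μ i' j'))
          - ∑ j' : Fin m, ∫ s in Iic (0:ℝ), g i'.succ j' (u+s) (zx (u+s) j') ∂(μ i' j')
        = ∑ j' : Fin m, ((∫ s in Iic (0:ℝ), g i'.succ j' (u+s) (zy (u+s) j') ∂(μ i' j'))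
            - ∫ s in Iic (0:ℝ), g i'.succ j' (u+s) (zx (u+s) j') ∂(μ i' j')) :=
      (Finset.sum_sub_distrib _ _).symm
    have hsum1 := Finset.sum_le_sum (fun j' (_ : j' ∈ Finset.univ) => hstep1 j')
    have hsplit : ∑ j' : Fin m, (cc i'.succ j'
          * (∫ s in Iic (0:ℝ), max (zy (u+s) j' - zx (u+s) j') 0 ∂(μ i' j'))
          - dd i'.succ j' * Φ)
        = (∑ j' : Fin m, cc i'.succ j'
            * ∫ s in Iic (0:ℝ), max (zy (u+s) j' - zx (u+s) j') 0 ∂(μ i' j'))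
          - (∑ j' : Fin m, dd i'.succ j') * Φ := by
      rw [Finset.sum_sub_distrib, ← Finset.sum_mul]
    rw [hsplit] at hsum1
    have hKb : (∑ j' : Fin m, dd i'.succ j') * Φ ≤ KK * Φ :=
      mul_le_mul_of_nonneg_right (hKKi i') hΦ0
    linarith [hstep2, hstep3, hsum1, hKb, hBsub, hCsub]
  -- Part A : p ≥ 0 on (-∞, t]
  have hbase : ∀ v ≤ (0:ℝ), ∀ i'', 0 ≤ p v i'' := by
    intro v hv i''
    have h := hxy v hv i''
    have hky : Dop m ν (fun _ _ => 0) (shift m zy v) i'' = Dhat m ν (fun _ _ => 0) y v i'' := by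
      simp only [Dhat, Dop, shift, Measure.restrict_zero, integral_zero_measure, sub_zero]
      congr 1
      · rw [hzy0 (v+0) (by linarith)]
      · refine Finset.sum_congr rfl (fun j' _ => ?_)
        refine setIntegral_congr_fun measurableSet_Iic (fun s hs => ?_)
        have hs0 : s ≤ 0 := hs
        rw [hzy0 (v+s) (by linarith)]
    have hkx : Dop m ν (fun _ _ => 0) (shift m zx v) i'' = Dhat m ν (fun _ _ => 0) x v i'' := by
      simp only [Dhat, Dop, shift, Measure.restrict_zero, integral_zero_measure, sub_zero]
      congr 1
      · rw [hzx0 (v+0) (by linarith)]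
      · refine Finset.sum_congr rfl (fun j' _ => ?_)
        refine setIntegral_congr_fun measurableSet_Iic (fun s hs => ?_)
        have hs0 : s ≤ 0 := hs
        rw [hzx0 (v+s) (by linarith)]
    simp only [hpdef]
    rw [hky, hkx]
    linarith [h]
  have hA : ∀ v ≤ t, ∀ i'', 0 ≤ p v i'' := by
    set δ : ℝ := (1-r)/(2*KK) with hδdef
    have hδpos : 0 < δ := div_pos h1r (by linarith)
    have hpcont : ∀ (i'' : Fin m), ∀ u ∈ Ico (0:ℝ) T0,
        ContinuousWithinAt (fun w => p w i'') (Ico 0 T0) u :=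
      fun i'' u hu => (hpder i'' u hu).continuousWithinAt
    have hstep : ∀ a, 0 ≤ a → a ≤ t → (∀ v ≤ a, ∀ i'', 0 ≤ p v i'') →
        ∀ v ≤ min (a + δ) t, ∀ i'', 0 ≤ p v i'' := by
      intro a ha0 hat hIH v hv i''
      set b : ℝ := min (a + δ) t with hbdef
      have hab : a ≤ b := le_min (by linarith) hat
      have hbt : b ≤ t := min_le_right _ _
      have hbT0 : b < T0 := lt_of_le_of_lt hbt htT0
      have hba : b - a ≤ δ := by
        have h := min_le_left (a+δ) t
        simp only [hbdef]
        linarith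
      rcases le_or_gt v a with hva | hva
      · exact hIH v hva i''
      have hIccsub : Icc a b ⊆ Ico 0 T0 :=
        fun w hw => ⟨le_trans ha0 hw.1, lt_of_le_of_lt hw.2 hbT0⟩
      have hpc : ∀ (i₀ : Fin m), ContinuousOn (fun w => p w i₀) (Icc a b) :=
        fun i₀ w hw => (hpcont i₀ w (hIccsub hw)).mono hIccsub
      have hqcont : ContinuousOn (fun w => ‖(fun i₀ => min (p w i₀) 0)‖) (Icc a b) := by
        apply ContinuousOn.norm
        exact continuousOn_pi.2 (fun i₀ => (hpc i₀).inf continuousOn_const)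
      obtain ⟨v₁, hv₁mem, hv₁max⟩ :=
        isCompact_Icc.exists_isMaxOn ⟨a, left_mem_Icc.2 hab⟩ hqcont
      set P : ℝ := ‖(fun i₀ => min (p v₁ i₀) 0)‖ with hPdef
      have hP0 : 0 ≤ P := norm_nonneg _
      have habs : ∀ w (i₀ : Fin m), |min (p w i₀) 0| ≤ ‖(fun i₀ => min (p w i₀) 0)‖ := by
        intro w i₀
        rw [← Real.norm_eq_abs]
        exact norm_le_pi_norm (fun i₀ => min (p w i₀) 0) i₀
      have hPb : ∀ w ≤ b, ∀ i₀, -P ≤ p w i₀ := by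
        intro w hw i₀
        rcases le_or_gt w a with h | h
        · linarith [hIH w h i₀]
        · have hwm : w ∈ Icc a b := ⟨h.le, hw⟩
          have h1 := habs w i₀
          have h2 : ‖(fun i₀ => min (p w i₀) 0)‖ ≤ P := hv₁max hwm
          have h3 := (abs_le.1 (le_trans h1 h2)).1
          linarith [min_le_left (p w i₀) (0:ℝ)]
      have hhalf : ∀ w ∈ Icc a b, ∀ i₀, -(P/2) ≤ min (p w i₀) 0 := by
        intro w hw i₀
        rcases le_or_gt 0 (p w i₀) with h | h
        · rw [min_eq_right h]; linarith
        set S : Set ℝ := Icc a w ∩ (fun w' => p w' i₀) ⁻¹' (Ici 0) with hSdef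
        have hSne : S.Nonempty := ⟨a, ⟨left_mem_Icc.2 hw.1, hIH a le_rfl i₀⟩⟩
        have hSbdd : BddAbove S := ⟨w, fun w' hw' => hw'.1.2⟩
        have hSclosed : IsClosed S :=
          ((hpc i₀).mono (Icc_subset_Icc le_rfl hw.2)).preimage_isClosed_of_isClosed
            isClosed_Icc isClosed_Ici
        set w₀ : ℝ := sSup S with hw₀def
        have hw₀S : w₀ ∈ S := hSclosed.csSup_mem hSne hSbdd
        have hw₀a : a ≤ w₀ := hw₀S.1.1
        have hw₀w : w₀ ≤ w := hw₀S.1.2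
        have hw₀p : 0 ≤ p w₀ i₀ := hw₀S.2
        have hneg : ∀ u' ∈ Ioc w₀ w, p u' i₀ < 0 := by
          intro u' hu'
          by_contra hcon
          push_neg at hcon
          have hmem : u' ∈ S := ⟨⟨le_trans hw₀a hu'.1.le, hu'.2⟩, hcon⟩
          exact absurd (le_csSup hSbdd hmem) (not_le.2 hu'.1)
        have hw₀w' : w₀ < w := by
          rcases lt_or_eq_of_le hw₀w with h' | h'
          · exact h'
          · rw [h'] at hw₀p; linarith
        have hple : p w₀ i₀ ≤ 0 := by
          by_contra hcon
          push_neg at hcon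
          have h1 : ContinuousWithinAt (fun w' => p w' i₀) (Icc a b) w₀ :=
            hpc i₀ w₀ ⟨hw₀a, le_trans hw₀w hw.2⟩
          have h2 := h1.mono (show Ioc w₀ w ⊆ Icc a b from
            fun u' hu' => ⟨le_trans hw₀a hu'.1.le, le_trans hu'.2 hw.2⟩)
          rw [ContinuousWithinAt, nhdsWithin_Ioc_eq_nhdsGT hw₀w'] at h2
          have hev1 := h2.eventually (eventually_gt_nhds hcon)
          have hev2 : Ioc w₀ w ∈ 𝓝[>] w₀ := Ioc_mem_nhdsGT_of_mem ⟨le_rfl, hw₀w'⟩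
          obtain ⟨u', hu'pos, hu'mem⟩ := (hev1.and (eventually_mem_set.2 hev2)).exists
          exact absurd hu'pos (not_lt.2 (hneg u' hu'mem).le)
        have hwT0 : w < T0 := lt_of_le_of_lt hw.2 hbT0
        have hslope := aux16_slope T0 (f := fun w' => p w' i₀)
          (f' := fun u' => Fcomp m μ g It u' (shift m zy u') i₀
            - Fcomp m μ g It u' (shift m zx u') i₀)
          (c := KK * (P/(1-r))) (le_trans ha0 hw₀a) hw₀w hwT0
          (fun u' hu' => hpder i₀ u' ⟨le_trans (le_trans ha0 hw₀a) hu'.1,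
            lt_of_le_of_lt (le_trans hu'.2 hw.2) hbT0⟩)
          (fun u' hu' => by
            apply hkey P hP0 u' (le_trans (le_trans ha0 hw₀a) hu'.1)
              (le_trans hu'.2 (le_trans hw.2 hbt)) i₀
            · rcases eq_or_lt_of_le hu'.1 with h' | h'
              · rw [← h']; exact hple
              · exact (hneg u' ⟨h', hu'.2⟩).le
            · exact fun v' hv' i₁ => hPb v' (le_trans hv' (le_trans hu'.2 hw.2)) i₁)
        have hcnn : 0 ≤ KK * (P/(1-r)) :=
          mul_nonneg hKKpos.le (div_nonneg hP0 h1r.le)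
        have hwb : w - w₀ ≤ δ := by
          have : w ≤ b := hw.2
          linarith [hw₀a, hba]
        have hbound : KK * (P/(1-r)) * (w - w₀) ≤ P/2 := by
          have h1 : KK * (P/(1-r)) * (w - w₀) ≤ KK * (P/(1-r)) * δ :=
            mul_le_mul_of_nonneg_left hwb hcnn
          have h2 : KK * (P/(1-r)) * δ = P/2 := by
            rw [hδdef]
            field_simp
          linarith
        have hfinal : -(P/2) ≤ p w i₀ := by
          have hthis : p w₀ i₀ - KK * (P/(1-r)) * (w - w₀) ≤ p w i₀ := hslope
          have hmid : -(P/2) ≤ p w₀ i₀ - KK * (P/(1-r)) * (w - w₀) := by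
            calc -(P/2) ≤ -(KK * (P/(1-r)) * (w - w₀)) := neg_le_neg hbound
              _ = 0 - KK * (P/(1-r)) * (w - w₀) := by ring
              _ ≤ p w₀ i₀ - KK * (P/(1-r)) * (w - w₀) := sub_le_sub_right hw₀p _
          exact le_trans hmid hthis
        exact le_min hfinal (by linarith)
      have hPhalf : P ≤ P/2 := by
        conv_lhs => rw [hPdef]
        rw [pi_norm_le_iff_of_nonneg (by linarith : (0:ℝ) ≤ P/2)]
        intro i₀
        rw [Real.norm_eq_abs, abs_le]
        constructor
        · linarith [hhalf v₁ hv₁mem i₀]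
        · exact le_trans (min_le_right _ _) (by linarith)
      have hP00 : P = 0 := le_antisymm (by linarith) hP0
      have h1 := hhalf v ⟨hva.le, hv⟩ i''
      rw [hP00] at h1
      have h2 := min_le_left (p v i'') (0:ℝ)
      simp at h1
      linarith [h1]
    have hind : ∀ n : ℕ, ∀ v ≤ min ((n:ℝ) * δ) t, ∀ i'', 0 ≤ p v i'' := by
      intro n
      induction n with
      | zero =>
        intro v hv i''
        apply hbase v _ i''
        have h0 := le_trans hv (min_le_left _ _)
        simpa using h0
      | succ n ih =>
        intro v hv i''
        have ha0 : 0 ≤ min ((n:ℝ)*δ) t := le_min (mul_nonneg n.cast_nonneg hδpos.le) ht0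
        have hat : min ((n:ℝ)*δ) t ≤ t := min_le_right _ _
        push_cast at hv
        have hmin : min (((n:ℝ)+1) * δ) t ≤ min (min ((n:ℝ)*δ) t + δ) t := by
          rcases le_total ((n:ℝ)*δ) t with h | h
          · rw [min_eq_left h]
            exact min_le_min (by linarith) le_rfl
          · rw [min_eq_right h]
            exact le_min (le_trans (min_le_right _ _) (by linarith)) (min_le_right _ _)
        exact hstep (min ((n:ℝ)*δ) t) ha0 hat ih v (le_trans hv hmin) i''
    obtain ⟨n, hn⟩ := exists_nat_ge (t/δ)
    have htn : t ≤ (n:ℝ)*δ := by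
      rw [div_le_iff₀ hδpos] at hn
      linarith
    intro v hv i''
    exact hind n v (by rw [min_eq_right htn]; exact hv) i''
  -- pointwise order
  have hΔ0 : ∀ u ≤ t, ∀ j', 0 ≤ Δ u j' := by
    have h := hNeu 0 le_rfl t hta'.le (fun v hv i'' => by
      simpa using hA v hv i'')
    intro u hu j'
    have := h u hu j'
    simpa using this
  -- Part B
  have hB : p t i ≤ Mass m μ ν g 0 y - Mass m μ ν g 0 x := by
    have hpy : ∀ (j i'' : Fin m), ∀ u₀ : ℝ, u₀ ≤ t →
        HasDerivAt (fun u => ∫ s in Iic (0:ℝ),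
            ((∫ w in (0:ℝ)..u, g j.succ i'' w (zy w i''))
              - ∫ w in (0:ℝ)..(u+s), g j.succ i'' w (zy w i'')) ∂(μ j i''))
          (g j.succ i'' u₀ (zy u₀ i'')
            - ∫ s in Iic (0:ℝ), g j.succ i'' (u₀+s) (zy (u₀+s) i'') ∂(μ j i'')) u₀ :=
      fun j i'' u₀ hu₀ => aux16_pipe_hasDeriv hT0pos ha'T (hqyC j.succ i'')
        (hqybd j.succ i'') (hμ1 j i'') (hμabs j i'') (lt_of_le_of_lt hu₀ hta')
    have hpx : ∀ (j i'' : Fin m), ∀ u₀ : ℝ, u₀ ≤ t →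
        HasDerivAt (fun u => ∫ s in Iic (0:ℝ),
            ((∫ w in (0:ℝ)..u, g j.succ i'' w (zx w i''))
              - ∫ w in (0:ℝ)..(u+s), g j.succ i'' w (zx w i'')) ∂(μ j i''))
          (g j.succ i'' u₀ (zx u₀ i'')
            - ∫ s in Iic (0:ℝ), g j.succ i'' (u₀+s) (zx (u₀+s) i'') ∂(μ j i'')) u₀ :=
      fun j i'' u₀ hu₀ => aux16_pipe_hasDeriv hT0pos ha'T (hqxC j.succ i'')
        (hqxbd j.succ i'') (hμ1 j i'') (hμabs j i'') (lt_of_le_of_lt hu₀ hta')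
    -- the algebraic cancellation
    have halg : ∀ u₀ : ℝ,
        (∑ i' : Fin m, (Fcomp m μ g It u₀ (shift m zy u₀) i'
            - Fcomp m μ g It u₀ (shift m zx u₀) i'))
        + ∑ j : Fin m, ∑ i'' : Fin m,
            ((g j.succ i'' u₀ (zy u₀ i'')
              - ∫ s in Iic (0:ℝ), g j.succ i'' (u₀+s) (zy (u₀+s) i'') ∂(μ j i''))
            - (g j.succ i'' u₀ (zx u₀ i'')
              - ∫ s in Iic (0:ℝ), g j.succ i'' (u₀+s) (zx (u₀+s) i'') ∂(μ j i'')))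
        = -∑ i' : Fin m, (g 0 i' u₀ (zy u₀ i') - g 0 i' u₀ (zx u₀ i')) := by
      intro u₀
      have hper : ∀ i' : Fin m,
          Fcomp m μ g It u₀ (shift m zy u₀) i' - Fcomp m μ g It u₀ (shift m zx u₀) i'
          = ((∑ j' : Fin m, ((∫ s in Iic (0:ℝ), g i'.succ j' (u₀+s) (zy (u₀+s) j') ∂(μ i' j'))
                - ∫ s in Iic (0:ℝ), g i'.succ j' (u₀+s) (zx (u₀+s) j') ∂(μ i' j')))
              - ∑ j' : Fin m, (g j'.succ i' u₀ (zy u₀ i') - g j'.succ i' u₀ (zx u₀ i')))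
            - (g 0 i' u₀ (zy u₀ i') - g 0 i' u₀ (zx u₀ i')) := by
        intro i'
        simp only [Fcomp, shift, add_zero]
        rw [Finset.sum_sub_distrib, Finset.sum_sub_distrib]
        ring
      rw [Finset.sum_congr rfl (fun i' _ => hper i'), Finset.sum_sub_distrib,
        Finset.sum_sub_distrib]
      have hpipe : (∑ j : Fin m, ∑ i'' : Fin m,
            ((g j.succ i'' u₀ (zy u₀ i'')
              - ∫ s in Iic (0:ℝ), g j.succ i'' (u₀+s) (zy (u₀+s) i'') ∂(μ j i''))
            - (g j.succ i'' u₀ (zx u₀ i'')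
              - ∫ s in Iic (0:ℝ), g j.succ i'' (u₀+s) (zx (u₀+s) i'') ∂(μ j i''))))
          = (∑ j : Fin m, ∑ i'' : Fin m, (g j.succ i'' u₀ (zy u₀ i'') - g j.succ i'' u₀ (zx u₀ i'')))
            - ∑ j : Fin m, ∑ i'' : Fin m,
              ((∫ s in Iic (0:ℝ), g j.succ i'' (u₀+s) (zy (u₀+s) i'') ∂(μ j i''))
                - ∫ s in Iic (0:ℝ), g j.succ i'' (u₀+s) (zx (u₀+s) i'') ∂(μ j i'')) := by
        rw [← Finset.sum_sub_distrib]
        refine Finset.sum_congr rfl (fun j _ => ?_)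
        rw [← Finset.sum_sub_distrib]
        refine Finset.sum_congr rfl (fun i'' _ => ?_)
        ring
      rw [hpipe]
      have hswap : (∑ i' : Fin m, ∑ j' : Fin m,
            (g j'.succ i' u₀ (zy u₀ i') - g j'.succ i' u₀ (zx u₀ i')))
          = ∑ j : Fin m, ∑ i'' : Fin m,
            (g j.succ i'' u₀ (zy u₀ i'') - g j.succ i'' u₀ (zx u₀ i'')) := Finset.sum_comm
      rw [← hswap]
      ring
    -- derivative of the Lyapunov function
    have hWder : ∀ u₀ ∈ Icc (0:ℝ) t, HasDerivWithinAt
        (fun u => (∑ i' : Fin m, p u i') + ∑ j : Fin m, ∑ i'' : Fin m,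
          ((∫ s in Iic (0:ℝ), ((∫ w in (0:ℝ)..u, g j.succ i'' w (zy w i''))
              - ∫ w in (0:ℝ)..(u+s), g j.succ i'' w (zy w i'')) ∂(μ j i'')) - (∫ s in Iic (0:ℝ), ((∫ w in (0:ℝ)..u, g j.succ i'' w (zx w i''))
              - ∫ w in (0:ℝ)..(u+s), g j.succ i'' w (zx w i'')) ∂(μ j i''))))
        (-∑ i' : Fin m, (g 0 i' u₀ (zy u₀ i') - g 0 i' u₀ (zx u₀ i'))) (Ico 0 T0) u₀ := by
      intro u₀ hu₀
      have hu₀' : u₀ ∈ Ico (0:ℝ) T0 := ⟨hu₀.1, lt_of_le_of_lt hu₀.2 htT0⟩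
      have hd1 : HasDerivWithinAt (fun u => ∑ i' : Fin m, p u i')
          (∑ i' : Fin m, (Fcomp m μ g It u₀ (shift m zy u₀) i'
            - Fcomp m μ g It u₀ (shift m zx u₀) i')) (Ico 0 T0) u₀ :=
        HasDerivWithinAt.fun_sum (fun i' _ => hpder i' u₀ hu₀')
      have hd3 : HasDerivWithinAt
          (fun u => ∑ j : Fin m, ∑ i'' : Fin m,
            ((∫ s in Iic (0:ℝ), ((∫ w in (0:ℝ)..u, g j.succ i'' w (zy w i''))
              - ∫ w in (0:ℝ)..(u+s), g j.succ i'' w (zy w i'')) ∂(μ j i'')) - (∫ s in Iic (0:ℝ), ((∫ w in (0:ℝ)..u, g j.succ i'' w (zx w i''))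
              - ∫ w in (0:ℝ)..(u+s), g j.succ i'' w (zx w i'')) ∂(μ j i''))))
          (∑ j : Fin m, ∑ i'' : Fin m,
            ((g j.succ i'' u₀ (zy u₀ i'')
              - ∫ s in Iic (0:ℝ), g j.succ i'' (u₀+s) (zy (u₀+s) i'') ∂(μ j i''))
            - (g j.succ i'' u₀ (zx u₀ i'')
              - ∫ s in Iic (0:ℝ), g j.succ i'' (u₀+s) (zx (u₀+s) i'') ∂(μ j i''))))
          (Ico 0 T0) u₀ :=
        HasDerivWithinAt.fun_sum (fun j _ => HasDerivWithinAt.fun_sum (fun i'' _ =>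
          ((hpy j i'' u₀ hu₀.2).sub (hpx j i'' u₀ hu₀.2)).hasDerivWithinAt))
      have hd := hd1.add hd3
      rw [← halg u₀]
      exact hd
    -- W is nonincreasing on [0, t]
    have hWmono : (∑ i' : Fin m, p t i') + ∑ j : Fin m, ∑ i'' : Fin m,
          ((∫ s in Iic (0:ℝ), ((∫ w in (0:ℝ)..t, g j.succ i'' w (zy w i''))
              - ∫ w in (0:ℝ)..(t+s), g j.succ i'' w (zy w i'')) ∂(μ j i'')) - (∫ s in Iic (0:ℝ), ((∫ w in (0:ℝ)..t, g j.succ i'' w (zx w i''))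
              - ∫ w in (0:ℝ)..(t+s), g j.succ i'' w (zx w i'')) ∂(μ j i''))) ≤ (∑ i' : Fin m, p (0:ℝ) i') + ∑ j : Fin m, ∑ i'' : Fin m,
          ((∫ s in Iic (0:ℝ), ((∫ w in (0:ℝ)..(0:ℝ), g j.succ i'' w (zy w i''))
              - ∫ w in (0:ℝ)..((0:ℝ)+s), g j.succ i'' w (zy w i'')) ∂(μ j i'')) - (∫ s in Iic (0:ℝ), ((∫ w in (0:ℝ)..(0:ℝ), g j.succ i'' w (zx w i''))
              - ∫ w in (0:ℝ)..((0:ℝ)+s), g j.succ i'' w (zx w i'')) ∂(μ j i''))) := by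
      have hs := aux16_slope T0 (f := fun u => -((∑ i' : Fin m, p u i') + ∑ j : Fin m, ∑ i'' : Fin m,
          ((∫ s in Iic (0:ℝ), ((∫ w in (0:ℝ)..u, g j.succ i'' w (zy w i''))
              - ∫ w in (0:ℝ)..(u+s), g j.succ i'' w (zy w i'')) ∂(μ j i'')) - (∫ s in Iic (0:ℝ), ((∫ w in (0:ℝ)..u, g j.succ i'' w (zx w i''))
              - ∫ w in (0:ℝ)..(u+s), g j.succ i'' w (zx w i'')) ∂(μ j i'')))))
        (f' := fun u₀ => ∑ i' : Fin m, (g 0 i' u₀ (zy u₀ i') - g 0 i' u₀ (zx u₀ i')))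
        (c := 0) le_rfl ht0 htT0
        (fun u₀ hu₀ => by
          have hn := (hWder u₀ hu₀).neg
          rw [neg_neg] at hn; exact hn)
        (fun u₀ hu₀ => by
          have hnn : 0 ≤ ∑ i' : Fin m, (g 0 i' u₀ (zy u₀ i') - g 0 i' u₀ (zx u₀ i')) := by
            apply Finset.sum_nonneg
            intro i' _
            have hz := hΔ0 u₀ hu₀.2 i'
            simp only [hΔdef] at hz
            exact sub_nonneg.2 (hC1mono 0 i' u₀ (by linarith))
          linarith)
      linarith [hs]
    -- W t dominates p t i
    have hWt : p t i ≤ (∑ i' : Fin m, p t i') + ∑ j : Fin m, ∑ i'' : Fin m,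
          ((∫ s in Iic (0:ℝ), ((∫ w in (0:ℝ)..t, g j.succ i'' w (zy w i''))
              - ∫ w in (0:ℝ)..(t+s), g j.succ i'' w (zy w i'')) ∂(μ j i'')) - (∫ s in Iic (0:ℝ), ((∫ w in (0:ℝ)..t, g j.succ i'' w (zx w i''))
              - ∫ w in (0:ℝ)..(t+s), g j.succ i'' w (zx w i'')) ∂(μ j i''))) := by
      have h1 : p t i ≤ ∑ i' : Fin m, p t i' :=
        Finset.single_le_sum (fun i' _ => hA t le_rfl i') (Finset.mem_univ i)
      have h2 : (0:ℝ) ≤ ∑ j : Fin m, ∑ i'' : Fin m,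
          ((∫ s in Iic (0:ℝ), ((∫ w in (0:ℝ)..t, g j.succ i'' w (zy w i''))
              - ∫ w in (0:ℝ)..(t+s), g j.succ i'' w (zy w i'')) ∂(μ j i'')) - (∫ s in Iic (0:ℝ), ((∫ w in (0:ℝ)..t, g j.succ i'' w (zx w i''))
              - ∫ w in (0:ℝ)..(t+s), g j.succ i'' w (zx w i'')) ∂(μ j i''))) := by
        apply Finset.sum_nonneg
        intro j _
        apply Finset.sum_nonneg
        intro i'' _
        have hIy' := aux16_pipe_integrableOn hT0pos ha'T (hqyC j.succ i'')
          (hqybd j.succ i'') (hμ1 j i'') (hμabs j i'') hta'.le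
        have hIx' := aux16_pipe_integrableOn hT0pos ha'T (hqxC j.succ i'')
          (hqxbd j.succ i'') (hμ1 j i'') (hμabs j i'') hta'.le
        have hpt : ∀ s ∈ Iic (0:ℝ),
            ((∫ w in (0:ℝ)..t, g j.succ i'' w (zx w i''))
              - ∫ w in (0:ℝ)..(t+s), g j.succ i'' w (zx w i''))
            ≤ (∫ w in (0:ℝ)..t, g j.succ i'' w (zy w i''))
              - ∫ w in (0:ℝ)..(t+s), g j.succ i'' w (zy w i'') := by
          intro s hs
          have hs0 : s ≤ (0:ℝ) := hs
          rw [aux16_Qdiff hT0pos (hqxC j.succ i'') (by linarith : t+s < T0) htT0,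
            aux16_Qdiff hT0pos (hqyC j.succ i'') (by linarith : t+s < T0) htT0]
          have hsub : uIcc (t+s) t ⊆ Iio T0 := by
            intro w hw
            rcases Set.mem_uIcc.1 hw with ⟨ha, hb⟩ | ⟨ha, hb⟩
            · exact lt_of_le_of_lt hb htT0
            · have : w ≤ t + s := hb
              have : w ≤ t := by linarith
              exact lt_of_le_of_lt this htT0
          apply intervalIntegral.integral_mono_on (by linarith : t+s ≤ t)
          · exact ((hqxC j.succ i'').mono hsub).intervalIntegrable
          · exact ((hqyC j.succ i'').mono hsub).intervalIntegrable
          · intro w hw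
            have hz := hΔ0 w hw.2 i''
            simp only [hΔdef] at hz
            exact hC1mono j.succ i'' w (by linarith)
        exact sub_nonneg.2 (setIntegral_mono_on hIx' hIy' measurableSet_Iic hpt)
      linarith [h1, h2]
    -- W 0 equals the mass difference
    have hW0 : (∑ i' : Fin m, p (0:ℝ) i') + ∑ j : Fin m, ∑ i'' : Fin m,
          ((∫ s in Iic (0:ℝ), ((∫ w in (0:ℝ)..(0:ℝ), g j.succ i'' w (zy w i''))
              - ∫ w in (0:ℝ)..((0:ℝ)+s), g j.succ i'' w (zy w i'')) ∂(μ j i'')) - (∫ s in Iic (0:ℝ), ((∫ w in (0:ℝ)..(0:ℝ), g j.succ i'' w (zx w i''))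
              - ∫ w in (0:ℝ)..((0:ℝ)+s), g j.succ i'' w (zx w i'')) ∂(μ j i''))) = Mass m μ ν g 0 y - Mass m μ ν g 0 x := by
      have hp0 : ∀ i' : Fin m, p 0 i'
          = Dop m ν (fun _ _ => 0) y i' - Dop m ν (fun _ _ => 0) x i' := by
        intro i'
        simp only [hpdef]
        congr 1
        · simp only [Dop, shift, Measure.restrict_zero, integral_zero_measure, sub_zero, zero_add]
          congr 1
          · rw [hzy0 0 le_rfl]
          · refine Finset.sum_congr rfl (fun j' _ => ?_)
            refine setIntegral_congr_fun measurableSet_Iic (fun s hs => ?_)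
            have hs0 : s ≤ (0:ℝ) := hs
            rw [hzy0 s hs0]
        · simp only [Dop, shift, Measure.restrict_zero, integral_zero_measure, sub_zero, zero_add]
          congr 1
          · rw [hzx0 0 le_rfl]
          · refine Finset.sum_congr rfl (fun j' _ => ?_)
            refine setIntegral_congr_fun measurableSet_Iic (fun s hs => ?_)
            have hs0 : s ≤ (0:ℝ) := hs
            rw [hzx0 s hs0]
      have hR0y : ∀ (j i'' : Fin m),
          (∫ s in Iic (0:ℝ), ((∫ w in (0:ℝ)..(0:ℝ), g j.succ i'' w (zy w i''))
              - ∫ w in (0:ℝ)..((0:ℝ)+s), g j.succ i'' w (zy w i'')) ∂(μ j i''))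
          = ∫ s in Iic (0:ℝ), (∫ τ in s..(0:ℝ), g j.succ i'' (0+τ) (y τ i'')) ∂(μ j i'') := by
        intro j i''
        refine setIntegral_congr_fun measurableSet_Iic (fun s hs => ?_)
        have hs0 : s ≤ (0:ℝ) := hs
        rw [aux16_Qdiff hT0pos (hqyC j.succ i'') (by rw [zero_add]; linarith : (0:ℝ)+s < T0) hT0pos,
          zero_add]
        refine intervalIntegral.integral_congr (fun τ hτ => ?_)
        have hτ0 : τ ≤ (0:ℝ) := by
          rcases Set.mem_uIcc.1 hτ with ⟨h1, h2⟩ | ⟨h1, h2⟩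
          · exact h2
          · linarith
        rw [zero_add, hzy0 τ hτ0]
      have hR0x : ∀ (j i'' : Fin m),
          (∫ s in Iic (0:ℝ), ((∫ w in (0:ℝ)..(0:ℝ), g j.succ i'' w (zx w i''))
              - ∫ w in (0:ℝ)..((0:ℝ)+s), g j.succ i'' w (zx w i'')) ∂(μ j i''))
          = ∫ s in Iic (0:ℝ), (∫ τ in s..(0:ℝ), g j.succ i'' (0+τ) (x τ i'')) ∂(μ j i'') := by
        intro j i''
        refine setIntegral_congr_fun measurableSet_Iic (fun s hs => ?_)
        have hs0 : s ≤ (0:ℝ) := hs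
        rw [aux16_Qdiff hT0pos (hqxC j.succ i'') (by rw [zero_add]; linarith : (0:ℝ)+s < T0) hT0pos,
          zero_add]
        refine intervalIntegral.integral_congr (fun τ hτ => ?_)
        have hτ0 : τ ≤ (0:ℝ) := by
          rcases Set.mem_uIcc.1 hτ with ⟨h1, h2⟩ | ⟨h1, h2⟩
          · exact h2
          · linarith
        rw [zero_add, hzx0 τ hτ0]
      rw [Finset.sum_congr rfl (fun i' _ => hp0 i'),
        Finset.sum_congr rfl (fun j (_ : j ∈ Finset.univ) =>
          Finset.sum_congr rfl (fun i'' (_ : i'' ∈ Finset.univ) => by rw [hR0y j i'', hR0x j i'']))]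
      rw [Finset.sum_sub_distrib]
      have hps : (∑ j : Fin m, ∑ i'' : Fin m,
            ((∫ s in Iic (0:ℝ), (∫ τ in s..(0:ℝ), g j.succ i'' (0+τ) (y τ i'')) ∂(μ j i''))
              - ∫ s in Iic (0:ℝ), (∫ τ in s..(0:ℝ), g j.succ i'' (0+τ) (x τ i'')) ∂(μ j i'')))
          = (∑ j : Fin m, ∑ i'' : Fin m,
              ∫ s in Iic (0:ℝ), (∫ τ in s..(0:ℝ), g j.succ i'' (0+τ) (y τ i'')) ∂(μ j i''))
            - ∑ j : Fin m, ∑ i'' : Fin m,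
              ∫ s in Iic (0:ℝ), (∫ τ in s..(0:ℝ), g j.succ i'' (0+τ) (x τ i'')) ∂(μ j i'') := by
        rw [← Finset.sum_sub_distrib]
        refine Finset.sum_congr rfl (fun j _ => ?_)
        rw [← Finset.sum_sub_distrib]
      rw [hps]
      simp only [Mass]
      have hcy : (∑ j : Fin m, ∑ i'' : Fin m,
            ∫ s in Iic (0:ℝ), (∫ τ in s..(0:ℝ), g j.succ i'' (0+τ) (y τ i'')) ∂(μ j i''))
          = ∑ i'' : Fin m, ∑ j : Fin m,
            ∫ s in Iic (0:ℝ), (∫ τ in s..(0:ℝ), g j.succ i'' (0+τ) (y τ i'')) ∂(μ j i'') :=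
        Finset.sum_comm
      have hcx : (∑ j : Fin m, ∑ i'' : Fin m,
            ∫ s in Iic (0:ℝ), (∫ τ in s..(0:ℝ), g j.succ i'' (0+τ) (x τ i'')) ∂(μ j i''))
          = ∑ i'' : Fin m, ∑ j : Fin m,
            ∫ s in Iic (0:ℝ), (∫ τ in s..(0:ℝ), g j.succ i'' (0+τ) (x τ i'')) ∂(μ j i'') :=
        Finset.sum_comm
      rw [hcy, hcx]
      ring
    calc p t i ≤ (∑ i' : Fin m, p t i') + ∑ j : Fin m, ∑ i'' : Fin m,
          ((∫ s in Iic (0:ℝ), ((∫ w in (0:ℝ)..t, g j.succ i'' w (zy w i''))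
              - ∫ w in (0:ℝ)..(t+s), g j.succ i'' w (zy w i'')) ∂(μ j i'')) - (∫ s in Iic (0:ℝ), ((∫ w in (0:ℝ)..t, g j.succ i'' w (zx w i''))
              - ∫ w in (0:ℝ)..(t+s), g j.succ i'' w (zx w i'')) ∂(μ j i''))) := hWt
      _ ≤ (∑ i' : Fin m, p (0:ℝ) i') + ∑ j : Fin m, ∑ i'' : Fin m,
          ((∫ s in Iic (0:ℝ), ((∫ w in (0:ℝ)..(0:ℝ), g j.succ i'' w (zy w i''))
              - ∫ w in (0:ℝ)..((0:ℝ)+s), g j.succ i'' w (zy w i'')) ∂(μ j i'')) - (∫ s in Iic (0:ℝ), ((∫ w in (0:ℝ)..(0:ℝ), g j.succ i'' w (zx w i''))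
              - ∫ w in (0:ℝ)..((0:ℝ)+s), g j.succ i'' w (zx w i'')) ∂(μ j i''))) := hWmono
      _ = _ := hW0
  constructor
  · have := hA t le_rfl i
    simpa only [hpdef] using this
  · simpa only [hpdef] using hB
end
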